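/- arXiv:2306.14001 — 3 statements merged into one kernel-verified Lean document; each statement's English description precedes it below -/
import Mathlib

section
/- Let X and Y be completely regular Hausdorff topological spaces and f : X × Y → [−∞, +∞] an extended real-valued function satisfying assumptions (A1)–(A4). Let S_f : C(X) × C(Y) ⇉ X × Y be the correspondence assigning to every pair (s,u) ∈ C(X) × C(Y) the (possibly empty) set of solutions of the saddle point problem for the function (x,y) ↦ f(x,y) + s(x) + u(y). Then S_f is single-valued and upper semicontinuous at (s,u) ∈ C(X) × C(Y) if and only if the saddle point problem for the function (x,y) ↦ f(x,y) + s(x) + u(y) is well-posed. -/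
open Filter Topology BoundedContinuousFunction

/-- `v_f(x) = inf_{y ∈ Y} f(x,y)`. -/
noncomputable def vmin {X Y : Type*} (f : X → Y → EReal) (x : X) : EReal := ⨅ y, f x y

/-- `w_f(y) = sup_{x ∈ X} f(x,y)`. -/
noncomputable def wmax {X Y : Type*} (f : X → Y → EReal) (y : Y) : EReal := ⨆ x, f x y

/-- `V_f = sup_{x ∈ X} v_f(x)`, the optimal value of the supinf problem. -/
noncomputable def Vval {X Y : Type*} (f : X → Y → EReal) : EReal := ⨆ x, vmin f x

/-- `W_f = inf_{y ∈ Y} w_f(y)`, the optimal value of the infsup problem. -/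
noncomputable def Wval {X Y : Type*} (f : X → Y → EReal) : EReal := ⨅ y, wmax f y

/-- (A1): for any `y ∈ Y` the function `f(·, y)` is upper semicontinuous. -/
def CondA1 {X Y : Type*} [TopologicalSpace X] (f : X → Y → EReal) : Prop :=
  ∀ y : Y, UpperSemicontinuous fun x => f x y

/-- (A2): `v_f` is bounded above on `X` and proper as a function with values in
`ℝ ∪ {-∞}` (i.e. finite at some point). -/
def CondA2 {X Y : Type*} (f : X → Y → EReal) : Prop :=
  (∃ M : ℝ, ∀ x, vmin f x ≤ (M : EReal)) ∧ ∃ x, vmin f x ≠ ⊥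

/-- (A3): for any `x ∈ X` the function `f(x, ·)` is lower semicontinuous. -/
def CondA3 {X Y : Type*} [TopologicalSpace Y] (f : X → Y → EReal) : Prop :=
  ∀ x : X, LowerSemicontinuous fun y => f x y

/-- (A4): `w_f` is bounded below on `Y` and proper as a function with values in
`ℝ ∪ {+∞}` (i.e. finite at some point). -/
def CondA4 {X Y : Type*} (f : X → Y → EReal) : Prop :=
  (∃ m : ℝ, ∀ y, (m : EReal) ≤ wmax f y) ∧ ∃ y, wmax f y ≠ ⊤

/-- `(x₀, y₀)` is a solution of the supinf problem for `f`:
`f(x₀,y₀) = inf_y f(x₀,y) = sup_x inf_y f(x,y)`. -/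
def SupinfSol {X Y : Type*} (f : X → Y → EReal) (x₀ : X) (y₀ : Y) : Prop :=
  f x₀ y₀ = vmin f x₀ ∧ vmin f x₀ = Vval f

/-- `(x₀, y₀)` is a solution of the infsup problem for `f`:
`f(x₀,y₀) = sup_x f(x,y₀) = inf_y sup_x f(x,y)`. -/
def InfsupSol {X Y : Type*} (f : X → Y → EReal) (x₀ : X) (y₀ : Y) : Prop :=
  f x₀ y₀ = wmax f y₀ ∧ wmax f y₀ = Wval f

/-- `(x₀, y₀)` is a saddle point of `f` on `X × Y`:
`f(x,y₀) ≤ f(x₀,y₀) ≤ f(x₀,y)` for all `x ∈ X`, `y ∈ Y`. -/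
def SaddlePt {X Y : Type*} (f : X → Y → EReal) (x₀ : X) (y₀ : Y) : Prop :=
  ∀ (x : X) (y : Y), f x y₀ ≤ f x₀ y₀ ∧ f x₀ y₀ ≤ f x₀ y

/-- `{(xₙ, yₙ)}` is an optimizing sequence for the saddle point problem for `f`:
`v_f(xₙ) → V_f`, `w_f(yₙ) → W_f` and `Δ_f = 0`. -/
def OptimizingSeq {X Y : Type*} (f : X → Y → EReal) (x : ℕ → X) (y : ℕ → Y) : Prop :=
  Tendsto (fun n => vmin f (x n)) atTop (𝓝 (Vval f)) ∧
  Tendsto (fun n => wmax f (y n)) atTop (𝓝 (Wval f)) ∧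
  Wval f - Vval f = 0

/-- The supinf problem for `f` is sup-well-posed with (unique) sup-solution `x₀`:
the problem `sup_X v_f` is well-posed with solution `x₀`. -/
def SupWellPosedAt {X Y : Type*} [TopologicalSpace X] (f : X → Y → EReal) (x₀ : X) : Prop :=
  vmin f x₀ = Vval f ∧ (∀ x, vmin f x = Vval f → x = x₀) ∧
  ∀ u : ℕ → X, Tendsto (fun n => vmin f (u n)) atTop (𝓝 (Vval f)) →
    Tendsto u atTop (𝓝 x₀)

/-- The infsup problem for `f` is inf-well-posed with (unique) inf-solution `y₀`:
the problem `inf_Y w_f` is well-posed with solution `y₀`. -/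
def InfWellPosedAt {X Y : Type*} [TopologicalSpace Y] (f : X → Y → EReal) (y₀ : Y) : Prop :=
  wmax f y₀ = Wval f ∧ (∀ y, wmax f y = Wval f → y = y₀) ∧
  ∀ u : ℕ → Y, Tendsto (fun n => wmax f (u n)) atTop (𝓝 (Wval f)) →
    Tendsto u atTop (𝓝 y₀)

/-- The saddle point problem for `f` is well-posed with unique solution `(x₀,y₀)`:
`(x₀,y₀)` is the unique saddle point of `f` and every optimizing sequence for the
saddle point problem converges to `(x₀,y₀)`. -/
def SPWellPosedAt {X Y : Type*} [TopologicalSpace X] [TopologicalSpace Y]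
    (f : X → Y → EReal) (x₀ : X) (y₀ : Y) : Prop :=
  SaddlePt f x₀ y₀ ∧ (∀ x y, SaddlePt f x y → x = x₀ ∧ y = y₀) ∧
  ∀ (x : ℕ → X) (y : ℕ → Y), OptimizingSeq f x y →
    Tendsto (fun n => (x n, y n)) atTop (𝓝 (x₀, y₀))

/-- The saddle point problem for `f` is well-posed. -/
def SPWellPosed {X Y : Type*} [TopologicalSpace X] [TopologicalSpace Y]
    (f : X → Y → EReal) : Prop :=
  ∃ x₀ y₀, SPWellPosedAt f x₀ y₀

/-- The solution correspondence of the saddle point problem for the perturbations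
`(x,y) ↦ f(x,y) + s(x) + u(y)`, `(s,u) ∈ C(X) × C(Y)`. -/
def SolSet {X Y : Type*} [TopologicalSpace X] [TopologicalSpace Y] (f : X → Y → EReal) (s : X →ᵇ ℝ) (u : Y →ᵇ ℝ) : Set (X × Y) :=
  {p | SaddlePt (fun x y => f x y + (s x : EReal) + (u y : EReal)) p.1 p.2}



open Filter Topology BoundedContinuousFunction

namespace SPAux

lemma addc (A : EReal) (a b : ℝ) : A + (a : EReal) + (b : EReal) = A + ((a + b : ℝ) : EReal) := by
  rw [add_assoc, ← EReal.coe_add]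

lemma add_coe_le_coe_iff {A : EReal} {b c : ℝ} :
    A + (b : EReal) ≤ (c : EReal) ↔ A ≤ ((c - b : ℝ) : EReal) := by
  rw [EReal.coe_sub]
  exact (EReal.le_sub_iff_add_le (Or.inl (EReal.coe_ne_bot b)) (Or.inl (EReal.coe_ne_top b))).symm

lemma coe_le_add_coe_iff {A : EReal} {b c : ℝ} :
    (c : EReal) ≤ A + (b : EReal) ↔ ((c - b : ℝ) : EReal) ≤ A := by
  rw [EReal.coe_sub]
  exact (EReal.sub_le_iff_le_add (Or.inl (EReal.coe_ne_bot b)) (Or.inl (EReal.coe_ne_top b))).symm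

lemma add_coe_le_coe_of {A : EReal} {b c : ℝ} (h : A + (b : EReal) ≤ (c : EReal))
    {b' c' : ℝ} (hbc : c - b ≤ c' - b') : A + (b' : EReal) ≤ (c' : EReal) := by
  rw [add_coe_le_coe_iff] at h ⊢
  exact le_trans h (EReal.coe_le_coe_iff.mpr hbc)

lemma iInf_add_coe {ι : Sort*} (h : ι → EReal) (c : ℝ) :
    ⨅ i, (h i + (c : EReal)) = (⨅ i, h i) + (c : EReal) := by
  refine le_antisymm ?_ (le_iInf fun i => add_le_add_left (iInf_le _ i) _)
  have h1 : (⨅ i, (h i + (c : EReal))) - (c : EReal) ≤ ⨅ i, h i :=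
    le_iInf fun i => by
      rw [EReal.sub_le_iff_le_add (Or.inl (EReal.coe_ne_bot c)) (Or.inl (EReal.coe_ne_top c))]
      exact iInf_le _ i
  calc ⨅ i, (h i + (c : EReal)) = (⨅ i, (h i + (c : EReal))) - (c : EReal) + c :=
        EReal.sub_add_cancel.symm
    _ ≤ (⨅ i, h i) + c := add_le_add_left h1 _

lemma iSup_add_coe {ι : Sort*} (h : ι → EReal) (c : ℝ) :
    ⨆ i, (h i + (c : EReal)) = (⨆ i, h i) + (c : EReal) := by
  refine le_antisymm (iSup_le fun i => add_le_add_left (le_iSup _ i) _) ?_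
  have h1 : (⨆ i, h i) ≤ (⨆ i, (h i + (c : EReal))) - (c : EReal) :=
    iSup_le fun i => by
      rw [EReal.le_sub_iff_add_le (Or.inl (EReal.coe_ne_bot c)) (Or.inl (EReal.coe_ne_top c))]
      exact le_iSup (fun i => h i + (c : EReal)) i
  calc (⨆ i, h i) + (c : EReal) ≤ (⨆ i, (h i + (c : EReal))) - (c : EReal) + c :=
        add_le_add_left h1 _
    _ = ⨆ i, (h i + (c : EReal)) := EReal.sub_add_cancel

lemma iInf_le_iInf_add {ι : Sort*} {h₁ h₂ : ι → EReal} {d : ℝ}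
    (h : ∀ i, h₁ i ≤ h₂ i + (d : EReal)) : (⨅ i, h₁ i) ≤ (⨅ i, h₂ i) + (d : EReal) := by
  rw [← iInf_add_coe]; exact iInf_mono h

lemma iSup_le_iSup_add {ι : Sort*} {h₁ h₂ : ι → EReal} {d : ℝ}
    (h : ∀ i, h₁ i ≤ h₂ i + (d : EReal)) : (⨆ i, h₁ i) ≤ (⨆ i, h₂ i) + (d : EReal) := by
  rw [← iSup_add_coe]; exact iSup_mono h

lemma usc_add_cont {X : Type*} [TopologicalSpace X] {φ : X → EReal} (hφ : UpperSemicontinuous φ)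
    {ρ : X → ℝ} (hρ : Continuous ρ) : UpperSemicontinuous fun x => φ x + (ρ x : EReal) := by
  intro x t ht
  simp only at ht
  have hφx : φ x ≠ ⊤ := by
    intro h
    rw [h, EReal.top_add_coe] at ht
    exact not_top_lt ht
  obtain ⟨d, e, hd, he, hde⟩ :
      ∃ d e : ℝ, φ x < (d : EReal) ∧ ρ x < e ∧ ((d + e : ℝ) : EReal) ≤ t := by
    induction t with
    | bot => exact absurd ht (by simp)
    | coe c =>
        have h1 : φ x < ((c - ρ x : ℝ) : EReal) := by
          rw [EReal.coe_sub]
          exact (EReal.lt_sub_iff_add_lt (Or.inl (EReal.coe_ne_bot _))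
            (Or.inl (EReal.coe_ne_top _))).mpr ht
        obtain ⟨d, hd1, hd2⟩ := EReal.exists_between_coe_real h1
        have hd2' : d < c - ρ x := EReal.coe_lt_coe_iff.mp hd2
        refine ⟨d, ρ x + (c - ρ x - d), hd1, by linarith, ?_⟩
        have : d + (ρ x + (c - ρ x - d)) = c := by ring
        rw [this]
    | top =>
        obtain ⟨d, hd1, _⟩ := EReal.exists_between_coe_real hφx.lt_top
        exact ⟨d, ρ x + 1, hd1, by linarith, le_top⟩
  have h1 : ∀ᶠ y in 𝓝 x, φ y < (d : EReal) := hφ x _ hd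
  have h2 : ∀ᶠ y in 𝓝 x, ρ y < e := (hρ.tendsto x).eventually (Iio_mem_nhds he)
  filter_upwards [h1, h2] with y hy1 hy2
  calc φ y + (ρ y : EReal) < (d : EReal) + (e : EReal) :=
        EReal.add_lt_add hy1 (EReal.coe_lt_coe_iff.mpr hy2)
    _ = ((d + e : ℝ) : EReal) := (EReal.coe_add _ _).symm
    _ ≤ t := hde

lemma lsc_neg {X : Type*} [TopologicalSpace X] {φ : X → EReal} (hφ : LowerSemicontinuous φ) :
    UpperSemicontinuous fun x => -φ x := by
  intro x t ht
  have h : -t < φ x := EReal.neg_lt_comm.mp ht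
  filter_upwards [hφ x _ h] with y hy
  exact EReal.neg_lt_comm.mpr hy

end SPAux

namespace SPAux

lemma exists_dominating_bump {X : Type*} [TopologicalSpace X] [CompletelyRegularSpace X]
    {r : X → EReal} (hr : UpperSemicontinuous r) {x₀ : X} (hx₀ : r x₀ ≤ 0)
    {δ : ℝ} (hδ : 0 < δ) (hrb : ∀ x, r x ≤ (δ : EReal)) :
    ∃ ψ : X → ℝ, Continuous ψ ∧ (∀ x, 0 ≤ ψ x) ∧ (∀ x, ψ x ≤ δ) ∧ ψ x₀ = 0 ∧
      ∀ x, r x ≤ (ψ x : EReal) := by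
  classical
  set c : ℕ → ℝ := fun k => δ / 2 / 2 ^ k with hc
  have hcpos : ∀ k, 0 < c k := fun k => by positivity
  have hcsum : Summable c := summable_geometric_two' δ
  have hcanti : ∀ {j k : ℕ}, j ≤ k → c k ≤ c j := by
    intro j k hjk
    have := pow_le_pow_right₀ (by norm_num : (1:ℝ) ≤ 2) hjk
    exact div_le_div_of_nonneg_left (by positivity) (by positivity) this
  have hAclosed : ∀ k : ℕ, IsClosed {x | ((c k : ℝ) : EReal) ≤ r x} := by
    intro k
    have : {x | ((c k : ℝ) : EReal) ≤ r x} = (r ⁻¹' (Set.Iio ((c k : ℝ) : EReal)))ᶜ := by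
      ext x; simp [not_lt]
    rw [this]
    exact (hr.isOpen_preimage _).isClosed_compl
  have hx₀mem : ∀ k : ℕ, x₀ ∉ {x | ((c k : ℝ) : EReal) ≤ r x} := by
    intro k h
    have h2 : ((c k : ℝ) : EReal) ≤ 0 := le_trans h hx₀
    have : (c k : ℝ) ≤ 0 := by exact_mod_cast h2
    exact absurd this (not_le.mpr (hcpos k))
  have hury := fun k : ℕ =>
    CompletelyRegularSpace.completely_regular x₀ _ (hAclosed k) (hx₀mem k)
  choose F hFc hF0 hF1 using hury
  set φ : ℕ → X → ℝ := fun k x => ((F k x : ℝ)) with hφ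
  have hφc : ∀ k, Continuous (φ k) := fun k => continuous_subtype_val.comp (hFc k)
  have hφ01 : ∀ k x, 0 ≤ φ k x ∧ φ k x ≤ 1 := fun k x => ⟨(F k x).2.1, (F k x).2.2⟩
  have hφ0 : ∀ k, φ k x₀ = 0 := by
    intro k
    simp only [hφ]
    rw [hF0 k]
    rfl
  have hφ1 : ∀ k x, ((c k : ℝ) : EReal) ≤ r x → φ k x = 1 := by
    intro k x hx
    simp only [hφ]
    rw [hF1 k hx]
    rfl
  have hsummand : ∀ x, Summable (fun k => c k * φ k x) := by
    intro x
    refine Summable.of_nonneg_of_le (fun k => mul_nonneg (hcpos k).le (hφ01 k x).1)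
      (fun k => ?_) hcsum
    exact mul_le_of_le_one_right (hcpos k).le (hφ01 k x).2
  refine ⟨fun x => ∑' k, c k * φ k x, ?_, ?_, ?_, ?_, ?_⟩
  · refine continuous_tsum (fun k => ((continuous_const).mul (hφc k))) hcsum (fun k x => ?_)
    rw [Real.norm_eq_abs, abs_of_nonneg (mul_nonneg (hcpos k).le (hφ01 k x).1)]
    exact mul_le_of_le_one_right (hcpos k).le (hφ01 k x).2
  · exact fun x => tsum_nonneg fun k => mul_nonneg (hcpos k).le (hφ01 k x).1
  · intro x
    have h1 : ∑' k, c k * φ k x ≤ ∑' k, c k :=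
      Summable.tsum_le_tsum (fun k => mul_le_of_le_one_right (hcpos k).le (hφ01 k x).2)
        (hsummand x) hcsum
    calc ∑' k, c k * φ k x ≤ ∑' k, c k := h1
      _ = δ := tsum_geometric_two' δ
  · simp only [hφ0, mul_zero, tsum_zero]
  · intro x
    by_cases h0 : r x ≤ 0
    · refine le_trans h0 ?_
      have : (0:ℝ) ≤ ∑' k, c k * φ k x :=
        tsum_nonneg fun k => mul_nonneg (hcpos k).le (hφ01 k x).1
      exact_mod_cast this
    · push_neg at h0
      have hxt : r x ≠ ⊤ := (lt_of_le_of_lt (hrb x) (EReal.coe_lt_top δ)).ne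
      have hxb : r x ≠ ⊥ := (lt_of_lt_of_le (bot_lt_iff_ne_bot.mpr (by simp)) (le_of_lt h0)).ne'
      set ρ : ℝ := (r x).toReal with hρdef
      have hρ : ((ρ : ℝ) : EReal) = r x := EReal.coe_toReal hxt hxb
      have hρpos : 0 < ρ := by
        have : ((0:ℝ) : EReal) < ((ρ : ℝ) : EReal) := by rw [hρ]; exact_mod_cast h0
        exact_mod_cast this
      have hρδ : ρ ≤ δ := by
        have : ((ρ : ℝ) : EReal) ≤ ((δ : ℝ) : EReal) := by rw [hρ]; exact hrb x
        exact_mod_cast this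
      -- find K minimal with c K ≤ ρ
      have hex : ∃ k, c k ≤ ρ := by
        obtain ⟨k, hk⟩ := exists_pow_lt_of_lt_one (show (0:ℝ) < ρ / (δ / 2) by positivity)
          (by norm_num : (1:ℝ)/2 < 1)
        refine ⟨k, ?_⟩
        have h2 : ((1:ℝ)/2) ^ k = 1 / 2 ^ k := by rw [div_pow, one_pow]
        rw [h2] at hk
        have h3 : δ / 2 / 2 ^ k = (δ / 2) * (1 / 2^k) := by ring
        have := mul_lt_mul_of_pos_left hk (show (0:ℝ) < δ/2 by positivity)
        rw [mul_div_cancel₀ _ (show (δ:ℝ)/2 ≠ 0 by positivity)] at this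
        rw [hc]
        simp only []
        rw [h3]
        exact this.le
      set K := Nat.find hex with hK
      have hKspec : c K ≤ ρ := Nat.find_spec hex
      have hKmin : ∀ j, j < K → ρ < c j := fun j hj => not_le.mp (Nat.find_min hex hj)
      have hmem : ∀ j, K ≤ j → φ j x = 1 := by
        intro j hj
        refine hφ1 j x ?_
        rw [← hρ]
        exact_mod_cast le_trans (hcanti hj) hKspec
      -- lower bound for the tsum
      have htsum_eq : ∑' b : ℕ, c (b + K) = δ / 2 ^ K := by
        have : ∀ b : ℕ, c (b + K) = (δ / 2 ^ K) / 2 / 2 ^ b := by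
          intro b
          simp only [hc]
          rw [pow_add]
          ring
        rw [funext this]
        exact tsum_geometric_two' _
      have hsumg : Summable (fun b : ℕ => c (b + K)) := by
        have : (fun b : ℕ => c (b + K)) = fun b : ℕ => (δ / 2 ^ K) / 2 / 2 ^ b := by
          funext b; simp only [hc]; rw [pow_add]; ring
        rw [this]
        exact summable_geometric_two' _
      have hlow : δ / 2 ^ K ≤ ∑' k, c k * φ k x := by
        rw [← htsum_eq]
        refine Summable.tsum_le_tsum_of_inj (fun b => b + K) (add_left_injective K)
          (fun k _ => mul_nonneg (hcpos k).le (hφ01 k x).1) (fun b => ?_) hsumg (hsummand x)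
        rw [hmem (b + K) (Nat.le_add_left K b), mul_one]
      have hρle : ρ ≤ δ / 2 ^ K := by
        rcases Nat.eq_zero_or_pos K with hK0 | hKpos
        · rw [hK0]; simpa using hρδ
        · obtain ⟨K', hKeq⟩ := Nat.exists_eq_succ_of_ne_zero hKpos.ne'
          have h5 := hKmin K' (by omega)
          have hcK' : c K' = δ / 2 ^ (K' + 1) := by
            simp only [hc]; rw [pow_succ]; ring
          rw [hcK'] at h5
          rw [hKeq]
          exact h5.le
      rw [← hρ]
      exact_mod_cast le_trans hρle hlow

end SPAux

namespace SPAux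

lemma saddle_vals {X Y : Type*} {g : X → Y → EReal} {x₀ : X} {y₀ : Y} (h : SaddlePt g x₀ y₀) :
    vmin g x₀ = g x₀ y₀ ∧ wmax g y₀ = g x₀ y₀ ∧ Vval g = g x₀ y₀ ∧ Wval g = g x₀ y₀ := by
  have h1 : vmin g x₀ = g x₀ y₀ :=
    le_antisymm (iInf_le _ y₀) (le_iInf fun y => (h x₀ y).2)
  have h2 : wmax g y₀ = g x₀ y₀ :=
    le_antisymm (iSup_le fun x => (h x y₀).1) (le_iSup (fun x => g x y₀) x₀)
  refine ⟨h1, h2, le_antisymm ?_ ?_, le_antisymm ?_ ?_⟩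
  · exact iSup_le fun x => le_trans (iInf_le _ y₀) (h x y₀).1
  · calc g x₀ y₀ = vmin g x₀ := h1.symm
      _ ≤ Vval g := le_iSup (vmin g) x₀
  · calc Wval g ≤ wmax g y₀ := iInf_le (wmax g) y₀
      _ = g x₀ y₀ := h2
  · exact le_iInf fun y => le_trans (h x₀ y).2 (le_iSup (fun x => g x y) x₀)

open BoundedContinuousFunction in
lemma pert_le {X Y : Type*} [TopologicalSpace X] [TopologicalSpace Y]
    (f : X → Y → EReal) (s s' : X →ᵇ ℝ) (u u' : Y →ᵇ ℝ) (x : X) (y : Y) :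
    f x y + (s' x : EReal) + (u' y : EReal) ≤
      f x y + (s x : EReal) + (u y : EReal) + ((‖s' - s‖ + ‖u' - u‖ : ℝ) : EReal) := by
  have h1 : s' x ≤ s x + ‖s' - s‖ := by
    have h := (s' - s).norm_coe_le_norm x
    rw [BoundedContinuousFunction.coe_sub, Pi.sub_apply, Real.norm_eq_abs] at h
    have := le_trans (le_abs_self _) h
    linarith
  have h2 : u' y ≤ u y + ‖u' - u‖ := by
    have h := (u' - u).norm_coe_le_norm y
    rw [BoundedContinuousFunction.coe_sub, Pi.sub_apply, Real.norm_eq_abs] at h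
    have := le_trans (le_abs_self _) h
    linarith
  calc f x y + (s' x : EReal) + (u' y : EReal)
      = f x y + ((s' x + u' y : ℝ) : EReal) := addc _ _ _
    _ ≤ f x y + ((s x + u y + (‖s' - s‖ + ‖u' - u‖) : ℝ) : EReal) :=
        add_le_add_right (EReal.coe_le_coe_iff.mpr (by linarith)) _
    _ = f x y + (s x : EReal) + (u y : EReal) + ((‖s' - s‖ + ‖u' - u‖ : ℝ) : EReal) := by
        rw [addc (f x y) (s x) (u y), addc (f x y) (s x + u y)]

end SPAux

namespace SPAux

/-- The perturbed function `f + s + u`. -/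
noncomputable def G {X Y : Type*} [TopologicalSpace X] [TopologicalSpace Y]
    (f : X → Y → EReal) (s : X →ᵇ ℝ) (u : Y →ᵇ ℝ) : X → Y → EReal :=
  fun x y => f x y + (s x : EReal) + (u y : EReal)

variable {X Y : Type*} [TopologicalSpace X] [TopologicalSpace Y]

lemma vmin_bound (f : X → Y → EReal) (s : X →ᵇ ℝ) (u : Y →ᵇ ℝ) {Mf : ℝ}
    (hMf : ∀ x, vmin f x ≤ (Mf : EReal)) (x : X) :
    vmin (G f s u) x ≤ ((Mf + (‖s‖ + ‖u‖) : ℝ) : EReal) := by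
  have h1 : vmin (G f s u) x ≤ vmin f x + ((‖s‖ + ‖u‖ : ℝ) : EReal) := by
    refine iInf_le_iInf_add fun y => ?_
    show f x y + (s x : EReal) + (u y : EReal) ≤ f x y + ((‖s‖ + ‖u‖ : ℝ) : EReal)
    rw [addc]
    refine add_le_add_right (EReal.coe_le_coe_iff.mpr ?_) _
    have h1 := s.norm_coe_le_norm x
    have h2 := u.norm_coe_le_norm y
    rw [Real.norm_eq_abs] at h1 h2
    have h3 := le_trans (le_abs_self (s x)) h1
    have h4 := le_trans (le_abs_self (u y)) h2
    linarith
  calc vmin (G f s u) x ≤ vmin f x + ((‖s‖ + ‖u‖ : ℝ) : EReal) := h1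
    _ ≤ (Mf : EReal) + ((‖s‖ + ‖u‖ : ℝ) : EReal) := add_le_add_left (hMf x) _
    _ = ((Mf + (‖s‖ + ‖u‖) : ℝ) : EReal) := (EReal.coe_add _ _).symm

lemma wmax_bound (f : X → Y → EReal) (s : X →ᵇ ℝ) (u : Y →ᵇ ℝ) {mf : ℝ}
    (hmf : ∀ y, (mf : EReal) ≤ wmax f y) (y : Y) :
    ((mf - (‖s‖ + ‖u‖) : ℝ) : EReal) ≤ wmax (G f s u) y := by
  have h1 : wmax f y + ((-(‖s‖ + ‖u‖) : ℝ) : EReal) ≤ wmax (G f s u) y := by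
    show wmax f y + _ ≤ ⨆ x, G f s u x y
    rw [show wmax f y = ⨆ x, f x y from rfl, ← iSup_add_coe]
    refine iSup_mono fun x => ?_
    show f x y + ((-(‖s‖ + ‖u‖) : ℝ) : EReal) ≤ f x y + (s x : EReal) + (u y : EReal)
    rw [addc]
    refine add_le_add_right (EReal.coe_le_coe_iff.mpr ?_) _
    have h1 := s.norm_coe_le_norm x
    have h2 := u.norm_coe_le_norm y
    rw [Real.norm_eq_abs] at h1 h2
    have h3 := le_trans (neg_le_abs (s x)) h1
    have h4 := le_trans (neg_le_abs (u y)) h2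
    linarith
  calc ((mf - (‖s‖ + ‖u‖) : ℝ) : EReal) = (mf : EReal) + ((-(‖s‖ + ‖u‖) : ℝ) : EReal) := by
        rw [← EReal.coe_add, sub_eq_add_neg]
    _ ≤ wmax f y + ((-(‖s‖ + ‖u‖) : ℝ) : EReal) := add_le_add_left (hmf y) _
    _ ≤ wmax (G f s u) y := h1

end SPAux

/-- **Theorem 4.4**: `S_f` is single-valued and upper semicontinuous at `(s,u)` iff
the saddle point problem for `f + s + u` is well-posed. -/
theorem singleValued_usc_iff_wellPosed
    {X Y : Type*} [TopologicalSpace X] [T2Space X] [CompletelyRegularSpace X]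
    [TopologicalSpace Y] [T2Space Y] [CompletelyRegularSpace Y]
    (f : X → Y → EReal) (hA1 : CondA1 f) (hA2 : CondA2 f) (hA3 : CondA3 f) (hA4 : CondA4 f)
    (s : X →ᵇ ℝ) (u : Y →ᵇ ℝ) :
    ((∃ p : X × Y, SolSet f s u = {p}) ∧
      (∀ W : Set (X × Y), IsOpen W → SolSet f s u ⊆ W →
        ∃ ε > (0 : ℝ), ∀ (s' : X →ᵇ ℝ) (u' : Y →ᵇ ℝ),
          ‖s' - s‖ < ε → ‖u' - u‖ < ε → SolSet f s' u' ⊆ W)) ↔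
    SPWellPosed (fun x y => f x y + (s x : EReal) + (u y : EReal)) := by
  classical
  obtain ⟨⟨Mf, hMf⟩, -⟩ := hA2
  obtain ⟨⟨mf, hmf⟩, -⟩ := hA4
  have hVb := SPAux.vmin_bound f s u hMf
  have hWb := SPAux.wmax_bound f s u hmf
  have hVle : Vval (SPAux.G f s u) ≤ ((Mf + (‖s‖ + ‖u‖) : ℝ) : EReal) := iSup_le hVb
  have hWge : ((mf - (‖s‖ + ‖u‖) : ℝ) : EReal) ≤ Wval (SPAux.G f s u) := le_iInf hWb
  constructor
  · rintro ⟨⟨p, hp⟩, husc⟩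
    have hpsad : SaddlePt (SPAux.G f s u) p.1 p.2 := by
      have hmem : p ∈ SolSet f s u := by rw [hp]; exact Set.mem_singleton _
      exact hmem
    have huniq : ∀ x y, SaddlePt (SPAux.G f s u) x y → x = p.1 ∧ y = p.2 := by
      intro x y hxy
      have hmem : (x, y) ∈ SolSet f s u := hxy
      rw [hp, Set.mem_singleton_iff] at hmem
      exact ⟨congrArg Prod.fst hmem, congrArg Prod.snd hmem⟩
    refine ⟨p.1, p.2, hpsad, huniq, ?_⟩
    intro xs ys hopt
    by_contra hnc
    rw [tendsto_nhds] at hnc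
    push_neg at hnc
    obtain ⟨W, hWopen, hpW, hWev⟩ := hnc
    have hWfreq : ∃ᶠ n in atTop, (xs n, ys n) ∉ W := Filter.not_eventually.mp hWev
    obtain ⟨hvmin_eq, hwmax_eq, hVeq, hWeq⟩ := SPAux.saddle_vals hpsad
    have hcle : SPAux.G f s u p.1 p.2 ≤ ((Mf + (‖s‖ + ‖u‖) : ℝ) : EReal) := hVeq ▸ hVle
    have hcge : ((mf - (‖s‖ + ‖u‖) : ℝ) : EReal) ≤ SPAux.G f s u p.1 p.2 := hWeq ▸ hWge
    have hcnetop : SPAux.G f s u p.1 p.2 ≠ ⊤ := (lt_of_le_of_lt hcle (EReal.coe_lt_top _)).ne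
    have hcnebot : SPAux.G f s u p.1 p.2 ≠ ⊥ := (lt_of_lt_of_le (EReal.bot_lt_coe _) hcge).ne'
    set v : ℝ := (SPAux.G f s u p.1 p.2).toReal with hvdef
    have hvc : ((v : ℝ) : EReal) = SPAux.G f s u p.1 p.2 := EReal.coe_toReal hcnetop hcnebot
    obtain ⟨ε, hε, hkey⟩ := husc W hWopen (by
      rw [hp]
      exact Set.singleton_subset_iff.mpr (by simpa using hpW))
    set δ : ℝ := ε / 3 with hδdef
    have hδ : 0 < δ := by positivity
    have hVv : Vval (SPAux.G f s u) = ((v : ℝ) : EReal) := by rw [hVeq, hvc]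
    have hWv : Wval (SPAux.G f s u) = ((v : ℝ) : EReal) := by rw [hWeq, hvc]
    have hopt1 : Tendsto (fun n => vmin (SPAux.G f s u) (xs n)) atTop
        (𝓝 (Vval (SPAux.G f s u))) := hopt.1
    have hopt2 : Tendsto (fun n => wmax (SPAux.G f s u) (ys n)) atTop
        (𝓝 (Wval (SPAux.G f s u))) := hopt.2.1
    rw [hVv] at hopt1
    rw [hWv] at hopt2
    have hlt1 : ((v - δ : ℝ) : EReal) < ((v : ℝ) : EReal) := EReal.coe_lt_coe_iff.mpr (by linarith)
    have hlt2 : ((v : ℝ) : EReal) < ((v + δ : ℝ) : EReal) := EReal.coe_lt_coe_iff.mpr (by linarith)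
    have h1 : ∀ᶠ n in atTop, ((v - δ : ℝ) : EReal) < vmin (SPAux.G f s u) (xs n) :=
      hopt1.eventually (lt_mem_nhds hlt1)
    have h2 : ∀ᶠ n in atTop, wmax (SPAux.G f s u) (ys n) < ((v + δ : ℝ) : EReal) :=
      hopt2.eventually (gt_mem_nhds hlt2)
    obtain ⟨n, hnW, hn1, hn2⟩ := (hWfreq.and_eventually (h1.and h2)).exists
    set xn := xs n with hxn
    set yn := ys n with hyn
    have hvc₀ : vmin (SPAux.G f s u) xn ≤ SPAux.G f s u xn yn :=
      iInf_le (fun y => SPAux.G f s u xn y) yn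
    have hc₀w : SPAux.G f s u xn yn ≤ wmax (SPAux.G f s u) yn :=
      le_iSup (fun x => SPAux.G f s u x yn) xn
    have hc₀lt : SPAux.G f s u xn yn < ((v + δ : ℝ) : EReal) := lt_of_le_of_lt hc₀w hn2
    have hc₀gt : ((v - δ : ℝ) : EReal) < SPAux.G f s u xn yn := lt_of_lt_of_le hn1 hvc₀
    set cr : ℝ := (SPAux.G f s u xn yn).toReal with hcrdef
    have hcr : ((cr : ℝ) : EReal) = SPAux.G f s u xn yn :=
      EReal.coe_toReal (hc₀lt.trans (EReal.coe_lt_top _)).ne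
        ((EReal.bot_lt_coe _).trans hc₀gt).ne'
    have hcr1 : v - δ < cr := by
      rw [← hcr] at hc₀gt; exact_mod_cast hc₀gt
    have hcr2 : cr < v + δ := by
      rw [← hcr] at hc₀lt; exact_mod_cast hc₀lt
    have hc₀def : f xn yn + ((s xn + u yn : ℝ) : EReal) = ((cr : ℝ) : EReal) := by
      rw [← SPAux.addc]; exact hcr.symm
    -- the bump on the X side
    have hrusc : UpperSemicontinuous (fun x => f x yn + ((s x + u yn - cr : ℝ) : EReal)) :=
      SPAux.usc_add_cont (hA1 yn) ((s.continuous.add continuous_const).sub continuous_const)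
    have hr0 : (fun x => f x yn + ((s x + u yn - cr : ℝ) : EReal)) xn ≤ 0 := by
      have h := SPAux.add_coe_le_coe_of hc₀def.le
        (le_of_eq (by ring : cr - (s xn + u yn) = 0 - (s xn + u yn - cr)))
      simpa using h
    have hrb : ∀ x, (fun x => f x yn + ((s x + u yn - cr : ℝ) : EReal)) x ≤ ((2*δ : ℝ) : EReal) := by
      intro x
      have hx1 : f x yn + ((s x + u yn : ℝ) : EReal) ≤ ((v + δ : ℝ) : EReal) := by
        rw [← SPAux.addc]
        exact le_of_lt (lt_of_le_of_lt (le_iSup (fun x => SPAux.G f s u x yn) x) hn2)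
      exact SPAux.add_coe_le_coe_of hx1 (by linarith)
    obtain ⟨ψ₁, hψ₁c, hψ₁0, hψ₁δ, hψ₁xn, hψ₁r⟩ :=
      SPAux.exists_dominating_bump hrusc hr0 (by positivity : (0:ℝ) < 2*δ) hrb
    -- the bump on the Y side
    have hfr : f xn yn = ((cr - (s xn + u yn) : ℝ) : EReal) := by
      calc f xn yn = f xn yn + ((s xn + u yn : ℝ) : EReal) - ((s xn + u yn : ℝ) : EReal) :=
            EReal.add_sub_cancel_right.symm
        _ = ((cr : ℝ) : EReal) - ((s xn + u yn : ℝ) : EReal) := by rw [hc₀def]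
        _ = ((cr - (s xn + u yn) : ℝ) : EReal) := (EReal.coe_sub _ _).symm
    have hqusc : UpperSemicontinuous (fun y => (- f xn y) + ((cr - s xn - u y : ℝ) : EReal)) :=
      SPAux.usc_add_cont (SPAux.lsc_neg (hA3 xn)) (continuous_const.sub u.continuous)
    have hq0 : (fun y => (- f xn y) + ((cr - s xn - u y : ℝ) : EReal)) yn ≤ 0 := by
      show (- f xn yn) + ((cr - s xn - u yn : ℝ) : EReal) ≤ 0
      rw [hfr, ← EReal.coe_neg, ← EReal.coe_add,
        (by ring : -(cr - (s xn + u yn)) + (cr - s xn - u yn) = 0)]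
      simp
    have hqb : ∀ y, (fun y => (- f xn y) + ((cr - s xn - u y : ℝ) : EReal)) y ≤ ((2*δ : ℝ) : EReal) := by
      intro y
      have h1 : ((v - δ : ℝ) : EReal) ≤ f xn y + ((s xn + u y : ℝ) : EReal) := by
        rw [← SPAux.addc]
        exact le_of_lt (lt_of_lt_of_le hn1 (iInf_le (fun y => SPAux.G f s u xn y) y))
      have h2 : ((v - δ - (s xn + u y) : ℝ) : EReal) ≤ f xn y := SPAux.coe_le_add_coe_iff.mp h1
      show (- f xn y) + ((cr - s xn - u y : ℝ) : EReal) ≤ ((2*δ : ℝ) : EReal)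
      rw [SPAux.add_coe_le_coe_iff]
      refine EReal.neg_le.mpr ?_
      rw [← EReal.coe_neg]
      refine le_trans (EReal.coe_le_coe_iff.mpr (by linarith)) h2
    obtain ⟨ψ₂, hψ₂c, hψ₂0, hψ₂δ, hψ₂yn, hψ₂q⟩ :=
      SPAux.exists_dominating_bump hqusc hq0 (by positivity : (0:ℝ) < 2*δ) hqb
    -- the perturbed pair
    set ψ₁b : X →ᵇ ℝ := BoundedContinuousFunction.mkOfBound ⟨ψ₁, hψ₁c⟩ (2*δ) (fun a b => by
      rw [Real.dist_eq, abs_sub_le_iff]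
      simp only [ContinuousMap.coe_mk]
      exact ⟨by linarith [hψ₁δ a, hψ₁0 b], by linarith [hψ₁δ b, hψ₁0 a]⟩) with hψ₁bdef
    set ψ₂b : Y →ᵇ ℝ := BoundedContinuousFunction.mkOfBound ⟨ψ₂, hψ₂c⟩ (2*δ) (fun a b => by
      rw [Real.dist_eq, abs_sub_le_iff]
      simp only [ContinuousMap.coe_mk]
      exact ⟨by linarith [hψ₂δ a, hψ₂0 b], by linarith [hψ₂δ b, hψ₂0 a]⟩) with hψ₂bdef
    have hψ₁bapp : ∀ x, ψ₁b x = ψ₁ x := fun x => rfl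
    have hψ₂bapp : ∀ y, ψ₂b y = ψ₂ y := fun y => rfl
    have hs'app : ∀ x, (s - ψ₁b) x = s x - ψ₁ x := fun x => rfl
    have hu'app : ∀ y, (u + ψ₂b) y = u y + ψ₂ y := fun y => rfl
    have hns : ‖(s - ψ₁b) - s‖ < ε := by
      rw [sub_sub_cancel_left, norm_neg]
      have h1 : ‖ψ₁b‖ ≤ 2*δ := (BoundedContinuousFunction.norm_le (by positivity)).mpr
        (fun x => by rw [hψ₁bapp x, Real.norm_eq_abs, abs_of_nonneg (hψ₁0 x)]; exact hψ₁δ x)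
      rw [hδdef] at h1
      linarith
    have hnu : ‖(u + ψ₂b) - u‖ < ε := by
      rw [add_sub_cancel_left]
      have h1 : ‖ψ₂b‖ ≤ 2*δ := (BoundedContinuousFunction.norm_le (by positivity)).mpr
        (fun y => by rw [hψ₂bapp y, Real.norm_eq_abs, abs_of_nonneg (hψ₂0 y)]; exact hψ₂δ y)
      rw [hδdef] at h1
      linarith
    have hsub := hkey (s - ψ₁b) (u + ψ₂b) hns hnu
    have hmem : (xn, yn) ∈ SolSet f (s - ψ₁b) (u + ψ₂b) := by
      show SaddlePt (fun x y => f x y + (((s - ψ₁b) x : ℝ) : EReal) + (((u + ψ₂b) y : ℝ) : EReal)) xn yn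
      intro x y
      constructor
      · have hL : f x yn + (((s - ψ₁b) x : ℝ) : EReal) + (((u + ψ₂b) yn : ℝ) : EReal)
            = f x yn + ((s x - ψ₁ x + u yn : ℝ) : EReal) := by
          rw [hs'app x, hu'app yn, hψ₂yn, add_zero, SPAux.addc]
        have hR : f xn yn + (((s - ψ₁b) xn : ℝ) : EReal) + (((u + ψ₂b) yn : ℝ) : EReal)
            = ((cr : ℝ) : EReal) := by
          rw [hs'app xn, hu'app yn, hψ₁xn, hψ₂yn, add_zero, sub_zero, SPAux.addc]
          exact hc₀def
        show f x yn + (((s - ψ₁b) x : ℝ) : EReal) + (((u + ψ₂b) yn : ℝ) : EReal)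
            ≤ f xn yn + (((s - ψ₁b) xn : ℝ) : EReal) + (((u + ψ₂b) yn : ℝ) : EReal)
        rw [hL, hR]
        exact SPAux.add_coe_le_coe_of (hψ₁r x) (le_of_eq (by ring))
      · have hR : f xn y + (((s - ψ₁b) xn : ℝ) : EReal) + (((u + ψ₂b) y : ℝ) : EReal)
            = f xn y + ((s xn + (u y + ψ₂ y) : ℝ) : EReal) := by
          rw [hs'app xn, hu'app y, hψ₁xn, sub_zero, SPAux.addc]
        have hRn : f xn yn + (((s - ψ₁b) xn : ℝ) : EReal) + (((u + ψ₂b) yn : ℝ) : EReal)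
            = ((cr : ℝ) : EReal) := by
          rw [hs'app xn, hu'app yn, hψ₁xn, hψ₂yn, add_zero, sub_zero, SPAux.addc]
          exact hc₀def
        show f xn yn + (((s - ψ₁b) xn : ℝ) : EReal) + (((u + ψ₂b) yn : ℝ) : EReal)
            ≤ f xn y + (((s - ψ₁b) xn : ℝ) : EReal) + (((u + ψ₂b) y : ℝ) : EReal)
        rw [hR, hRn]
        have h3 := SPAux.add_coe_le_coe_iff.mp (hψ₂q y)
        have h4 : ((cr - s xn - u y - ψ₂ y : ℝ) : EReal) ≤ f xn y := by
          have h5 := EReal.neg_le.mp h3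
          rw [← EReal.coe_neg] at h5
          refine le_trans (le_of_eq ?_) h5
          norm_cast
          ring
        calc ((cr : ℝ) : EReal)
            = ((cr - s xn - u y - ψ₂ y : ℝ) : EReal) + ((s xn + (u y + ψ₂ y) : ℝ) : EReal) := by
              rw [← EReal.coe_add]
              norm_cast
              ring
          _ ≤ f xn y + ((s xn + (u y + ψ₂ y) : ℝ) : EReal) := add_le_add_left h4 _
    exact hnW (hsub hmem)
  · rintro ⟨x₀, y₀, hsad0, huniq, hconv⟩
    have hsad : SaddlePt (SPAux.G f s u) x₀ y₀ := hsad0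
    have hSol : SolSet f s u = {(x₀, y₀)} := by
      ext q
      constructor
      · intro hq
        obtain ⟨h1, h2⟩ := huniq q.1 q.2 hq
        have h3 : q = (x₀, y₀) := Prod.ext h1 h2
        rw [h3]
        exact Set.mem_singleton _
      · intro hq
        rw [Set.mem_singleton_iff] at hq
        rw [hq]
        exact hsad
    refine ⟨⟨(x₀, y₀), hSol⟩, ?_⟩
    intro W hWopen hWsub
    by_contra hW
    push_neg at hW
    have hseq : ∀ n : ℕ, ∃ (s' : X →ᵇ ℝ) (u' : Y →ᵇ ℝ) (pt : X × Y),
        ‖s' - s‖ + ‖u' - u‖ ≤ 2 * (1/((n:ℝ)+1)) ∧ pt ∈ SolSet f s' u' ∧ pt ∉ W := by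
      intro n
      obtain ⟨s', u', h1, h2, h3⟩ := hW (1/((n:ℝ)+1)) (by positivity)
      obtain ⟨pt, hpt, hptW⟩ := Set.not_subset.mp h3
      exact ⟨s', u', pt, by linarith, hpt, hptW⟩
    choose ss uu pp hdn hpp hpW using hseq
    have hd0 : ∀ n, 0 ≤ ‖ss n - s‖ + ‖uu n - u‖ :=
      fun n => add_nonneg (norm_nonneg _) (norm_nonneg _)
    have hdlim : Tendsto (fun n => ‖ss n - s‖ + ‖uu n - u‖) atTop (𝓝 0) := by
      refine squeeze_zero hd0 hdn ?_
      have h2 := tendsto_one_div_add_atTop_nhds_zero_nat.const_mul (2:ℝ)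
      simpa using h2
    have hAB : ∀ n x y, SPAux.G f (ss n) (uu n) x y ≤
        SPAux.G f s u x y + ((‖ss n - s‖ + ‖uu n - u‖ : ℝ) : EReal) :=
      fun n x y => SPAux.pert_le f s (ss n) u (uu n) x y
    have hBA : ∀ n x y, SPAux.G f s u x y ≤
        SPAux.G f (ss n) (uu n) x y + ((‖ss n - s‖ + ‖uu n - u‖ : ℝ) : EReal) := by
      intro n x y
      have h := SPAux.pert_le f (ss n) s (uu n) u x y
      rwa [norm_sub_rev s (ss n), norm_sub_rev u (uu n)] at h
    have hsadn : ∀ n, SaddlePt (SPAux.G f (ss n) (uu n)) (pp n).1 (pp n).2 := fun n => hpp n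
    have hvals := fun n => SPAux.saddle_vals (hsadn n)
    have hvmin_pert1 : ∀ n x, vmin (SPAux.G f (ss n) (uu n)) x ≤
        vmin (SPAux.G f s u) x + ((‖ss n - s‖ + ‖uu n - u‖ : ℝ) : EReal) :=
      fun n x => SPAux.iInf_le_iInf_add (fun y => hAB n x y)
    have hvmin_pert2 : ∀ n x, vmin (SPAux.G f s u) x ≤
        vmin (SPAux.G f (ss n) (uu n)) x + ((‖ss n - s‖ + ‖uu n - u‖ : ℝ) : EReal) :=
      fun n x => SPAux.iInf_le_iInf_add (fun y => hBA n x y)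
    have hwmax_pert1 : ∀ n y, wmax (SPAux.G f (ss n) (uu n)) y ≤
        wmax (SPAux.G f s u) y + ((‖ss n - s‖ + ‖uu n - u‖ : ℝ) : EReal) :=
      fun n y => SPAux.iSup_le_iSup_add (fun x => hAB n x y)
    have hwmax_pert2 : ∀ n y, wmax (SPAux.G f s u) y ≤
        wmax (SPAux.G f (ss n) (uu n)) y + ((‖ss n - s‖ + ‖uu n - u‖ : ℝ) : EReal) :=
      fun n y => SPAux.iSup_le_iSup_add (fun x => hBA n x y)
    -- the saddle values of the perturbed problems are finite
    have hcle : ∀ n, SPAux.G f (ss n) (uu n) (pp n).1 (pp n).2 ≤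
        ((Mf + (‖s‖ + ‖u‖) + (‖ss n - s‖ + ‖uu n - u‖) : ℝ) : EReal) := by
      intro n
      have h1 := hvmin_pert1 n (pp n).1
      rw [(hvals n).1] at h1
      calc SPAux.G f (ss n) (uu n) (pp n).1 (pp n).2
          ≤ vmin (SPAux.G f s u) (pp n).1 + ((‖ss n - s‖ + ‖uu n - u‖ : ℝ) : EReal) := h1
        _ ≤ ((Mf + (‖s‖ + ‖u‖) : ℝ) : EReal) + ((‖ss n - s‖ + ‖uu n - u‖ : ℝ) : EReal) :=
            add_le_add_left (hVb _) _
        _ = ((Mf + (‖s‖ + ‖u‖) + (‖ss n - s‖ + ‖uu n - u‖) : ℝ) : EReal) :=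
            (EReal.coe_add _ _).symm
    have hcge : ∀ n, ((mf - (‖s‖ + ‖u‖) - (‖ss n - s‖ + ‖uu n - u‖) : ℝ) : EReal) ≤
        SPAux.G f (ss n) (uu n) (pp n).1 (pp n).2 := by
      intro n
      have h1 := hwmax_pert2 n (pp n).2
      rw [(hvals n).2.1] at h1
      have h2 : ((mf - (‖s‖ + ‖u‖) : ℝ) : EReal) ≤
          SPAux.G f (ss n) (uu n) (pp n).1 (pp n).2 + ((‖ss n - s‖ + ‖uu n - u‖ : ℝ) : EReal) :=
        le_trans (hWb _) h1
      exact SPAux.coe_le_add_coe_iff.mp h2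
    have hγc : ∀ n, (((SPAux.G f (ss n) (uu n) (pp n).1 (pp n).2).toReal : ℝ) : EReal) =
        SPAux.G f (ss n) (uu n) (pp n).1 (pp n).2 := by
      intro n
      exact EReal.coe_toReal
        (lt_of_le_of_lt (hcle n) (EReal.coe_lt_top _)).ne
        (lt_of_lt_of_le (EReal.bot_lt_coe _) (hcge n)).ne'
    set γ : ℕ → ℝ := fun n => (SPAux.G f (ss n) (uu n) (pp n).1 (pp n).2).toReal with hγdef
    -- bounds relating γ to Vval and Wval
    have hVle2 : ∀ n, Vval (SPAux.G f s u) ≤ ((γ n + (‖ss n - s‖ + ‖uu n - u‖) : ℝ) : EReal) := by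
      intro n
      have h1 : Vval (SPAux.G f s u) ≤ Vval (SPAux.G f (ss n) (uu n)) +
          ((‖ss n - s‖ + ‖uu n - u‖ : ℝ) : EReal) :=
        SPAux.iSup_le_iSup_add (fun x => hvmin_pert2 n x)
      rw [(hvals n).2.2.1, ← hγc n, ← EReal.coe_add] at h1
      exact h1
    have hVge2 : ∀ n, ((γ n - (‖ss n - s‖ + ‖uu n - u‖) : ℝ) : EReal) ≤ Vval (SPAux.G f s u) := by
      intro n
      have h1 := hvmin_pert1 n (pp n).1
      rw [(hvals n).1, ← hγc n] at h1
      exact le_trans (SPAux.coe_le_add_coe_iff.mp h1) (le_iSup (vmin (SPAux.G f s u)) (pp n).1)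
    have hWle2 : ∀ n, Wval (SPAux.G f s u) ≤ ((γ n + (‖ss n - s‖ + ‖uu n - u‖) : ℝ) : EReal) := by
      intro n
      have h1 := hwmax_pert2 n (pp n).2
      rw [(hvals n).2.1, ← hγc n, ← EReal.coe_add] at h1
      exact le_trans (iInf_le (wmax (SPAux.G f s u)) (pp n).2) h1
    have hWge2 : ∀ n, ((γ n - (‖ss n - s‖ + ‖uu n - u‖) : ℝ) : EReal) ≤ Wval (SPAux.G f s u) := by
      intro n
      have h1 : Wval (SPAux.G f (ss n) (uu n)) ≤ Wval (SPAux.G f s u) +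
          ((‖ss n - s‖ + ‖uu n - u‖ : ℝ) : EReal) :=
        SPAux.iInf_le_iInf_add (fun y => hwmax_pert1 n y)
      rw [(hvals n).2.2.2, ← hγc n] at h1
      exact SPAux.coe_le_add_coe_iff.mp h1
    -- Vval and Wval are finite
    have hVnetop : Vval (SPAux.G f s u) ≠ ⊤ := (lt_of_le_of_lt hVle (EReal.coe_lt_top _)).ne
    have hVnebot : Vval (SPAux.G f s u) ≠ ⊥ :=
      (lt_of_lt_of_le (EReal.bot_lt_coe _) (hVge2 0)).ne'
    have hWnetop : Wval (SPAux.G f s u) ≠ ⊤ :=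
      (lt_of_le_of_lt (hWle2 0) (EReal.coe_lt_top _)).ne
    have hWnebot : Wval (SPAux.G f s u) ≠ ⊥ := (lt_of_lt_of_le (EReal.bot_lt_coe _) hWge).ne'
    set v : ℝ := (Vval (SPAux.G f s u)).toReal with hvdef
    set w : ℝ := (Wval (SPAux.G f s u)).toReal with hwdef
    have hv : ((v : ℝ) : EReal) = Vval (SPAux.G f s u) := EReal.coe_toReal hVnetop hVnebot
    have hw : ((w : ℝ) : EReal) = Wval (SPAux.G f s u) := EReal.coe_toReal hWnetop hWnebot
    have hvγ : ∀ n, |v - γ n| ≤ ‖ss n - s‖ + ‖uu n - u‖ := by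
      intro n
      have h1 : γ n - (‖ss n - s‖ + ‖uu n - u‖) ≤ v := by
        have := hVge2 n; rw [← hv] at this; exact_mod_cast this
      have h2 : v ≤ γ n + (‖ss n - s‖ + ‖uu n - u‖) := by
        have := hVle2 n; rw [← hv] at this; exact_mod_cast this
      rw [abs_le]
      exact ⟨by linarith, by linarith⟩
    have hwγ : ∀ n, |w - γ n| ≤ ‖ss n - s‖ + ‖uu n - u‖ := by
      intro n
      have h1 : γ n - (‖ss n - s‖ + ‖uu n - u‖) ≤ w := by
        have := hWge2 n; rw [← hw] at this; exact_mod_cast this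
      have h2 : w ≤ γ n + (‖ss n - s‖ + ‖uu n - u‖) := by
        have := hWle2 n; rw [← hw] at this; exact_mod_cast this
      rw [abs_le]
      exact ⟨by linarith, by linarith⟩
    have hvw : v = w := by
      have h1 : ∀ n, |v - w| ≤ 2 * (‖ss n - s‖ + ‖uu n - u‖) := by
        intro n
        have ha := hvγ n
        have hb := hwγ n
        have hc := abs_sub_le v (γ n) w
        have hd : |γ n - w| = |w - γ n| := abs_sub_comm _ _
        linarith [abs_sub_le v (γ n) w]
      have hd2 : Tendsto (fun n => 2 * (‖ss n - s‖ + ‖uu n - u‖)) atTop (𝓝 0) := by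
        simpa using hdlim.const_mul (2:ℝ)
      have h2 : |v - w| ≤ 0 := ge_of_tendsto hd2 (Filter.Eventually.of_forall h1)
      have h3 : |v - w| = 0 := le_antisymm h2 (abs_nonneg _)
      rwa [abs_eq_zero, sub_eq_zero] at h3
    have hΔ : Wval (SPAux.G f s u) - Vval (SPAux.G f s u) = 0 := by
      rw [← hv, ← hw, ← EReal.coe_sub, hvw]
      simp
    have hγlim : Tendsto γ atTop (𝓝 v) := by
      refine tendsto_of_tendsto_of_tendsto_of_le_of_le
        (g := fun n => v - (‖ss n - s‖ + ‖uu n - u‖))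
        (h := fun n => v + (‖ss n - s‖ + ‖uu n - u‖)) ?_ ?_ ?_ ?_
      · simpa using tendsto_const_nhds.sub hdlim
      · simpa using tendsto_const_nhds.add hdlim
      · intro n
        show v - (‖ss n - s‖ + ‖uu n - u‖) ≤ γ n
        have := abs_le.mp (hvγ n)
        linarith [this.2]
      · intro n
        show γ n ≤ v + (‖ss n - s‖ + ‖uu n - u‖)
        have := abs_le.mp (hvγ n)
        linarith [this.1]
    have hvmlim : Tendsto (fun n => vmin (SPAux.G f s u) ((pp n).1)) atTop
        (𝓝 (Vval (SPAux.G f s u))) := by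
      rw [← hv]
      refine tendsto_of_tendsto_of_tendsto_of_le_of_le
        (g := fun n => ((γ n - (‖ss n - s‖ + ‖uu n - u‖) : ℝ) : EReal))
        (h := fun n => ((v : ℝ) : EReal)) ?_ tendsto_const_nhds ?_ ?_
      · refine EReal.tendsto_coe.mpr ?_
        simpa using hγlim.sub hdlim
      · intro n
        have h1 := hvmin_pert1 n (pp n).1
        rw [(hvals n).1, ← hγc n] at h1
        exact SPAux.coe_le_add_coe_iff.mp h1
      · intro n
        rw [hv]
        exact le_iSup (vmin (SPAux.G f s u)) (pp n).1
    have hwmlim : Tendsto (fun n => wmax (SPAux.G f s u) ((pp n).2)) atTop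
        (𝓝 (Wval (SPAux.G f s u))) := by
      rw [← hw]
      refine tendsto_of_tendsto_of_tendsto_of_le_of_le
        (g := fun n => ((w : ℝ) : EReal))
        (h := fun n => ((γ n + (‖ss n - s‖ + ‖uu n - u‖) : ℝ) : EReal))
        tendsto_const_nhds ?_ ?_ ?_
      · refine EReal.tendsto_coe.mpr ?_
        have h1 : Tendsto (fun n => γ n + (‖ss n - s‖ + ‖uu n - u‖)) atTop (𝓝 (v + 0)) :=
          hγlim.add hdlim
        rw [hvw] at h1
        simpa using h1
      · intro n
        rw [hw]
        exact iInf_le (wmax (SPAux.G f s u)) (pp n).2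
      · intro n
        have h1 := hwmax_pert2 n (pp n).2
        rw [(hvals n).2.1, ← hγc n, ← EReal.coe_add] at h1
        exact h1
    have hopt : OptimizingSeq (SPAux.G f s u) (fun n => (pp n).1) (fun n => (pp n).2) :=
      ⟨hvmlim, hwmlim, hΔ⟩
    have htend := hconv _ _ hopt
    have hW0 : (x₀, y₀) ∈ W := hWsub hsad
    have hev : ∀ᶠ n in atTop, ((pp n).1, (pp n).2) ∈ W :=
      htend.eventually (hWopen.mem_nhds hW0)
    obtain ⟨n, hn⟩ := hev.exists
    exact hpW n (by simpa using hn)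
end

section
/- Let X and Y be completely regular Hausdorff topological spaces and f : X × Y → [−∞, +∞] an extended real-valued function satisfying assumptions (A1)–(A4). Let S̃_f : C(X × Y) ⇉ X × Y be the correspondence assigning to each z ∈ C(X × Y) the (possibly empty) set of solutions of the saddle point problem for the function (x,y) ↦ f(x,y) + z(x,y). Then S̃_f is single-valued and upper semicontinuous at z ∈ C(X × Y) if and only if the saddle point problem for the function (x,y) ↦ f(x,y) + z(x,y) is well-posed. -/
open Filter Topology BoundedContinuousFunction

/-- The solution correspondence of the saddle point problem for the perturbations
`(x,y) ↦ f(x,y) + z(x,y)`, `z ∈ C(X × Y)`. -/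
def SolSetJoint {X Y : Type*} [TopologicalSpace X] [TopologicalSpace Y]
    (f : X → Y → EReal) (z : (X × Y) →ᵇ ℝ) : Set (X × Y) :=
  {p | SaddlePt (fun x y => f x y + (z (x, y) : EReal)) p.1 p.2}


section Helpers

open unitInterval

namespace SPT

lemma sub_le_iff' {a b : EReal} {r : ℝ} : a - (r:EReal) ≤ b ↔ a ≤ b + r :=
  EReal.sub_le_iff_le_add (by simp) (by simp)

lemma iInf_le_iInf_add {ι : Sort*} {u v : ι → EReal} {r : ℝ}
    (h : ∀ i, u i ≤ v i + r) : (⨅ i, u i) ≤ (⨅ i, v i) + r := by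
  rw [← sub_le_iff']
  exact le_iInf fun i => sub_le_iff'.2 ((iInf_le u i).trans (h i))

lemma iSup_le_iSup_add {ι : Sort*} {u v : ι → EReal} {r : ℝ}
    (h : ∀ i, u i ≤ v i + r) : (⨆ i, u i) ≤ (⨆ i, v i) + r :=
  iSup_le fun i => (h i).trans (add_le_add_left (le_iSup v i) _)

lemma add_coe_le_add_coe (a : EReal) {u v : ℝ} (h : u ≤ v) : a + (u:EReal) ≤ a + v :=
  add_le_add_right (EReal.coe_le_coe_iff.2 h) a

lemma le_add_coe (a : EReal) {u : ℝ} (h : 0 ≤ u) : a ≤ a + (u:EReal) := by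
  calc a = a + ((0:ℝ):EReal) := by simp
  _ ≤ a + (u:EReal) := add_coe_le_add_coe a h

lemma add_coe_add (a : EReal) (u v : ℝ) : a + (u:EReal) + (v:EReal) = a + ((u+v:ℝ):EReal) := by
  rw [add_assoc, ← EReal.coe_add]

lemma add_coe_ne_top {a : EReal} (ha : a ≠ ⊤) (r : ℝ) : a + (r:EReal) ≠ ⊤ := by
  induction a with
  | bot => simp
  | coe s => rw [← EReal.coe_add]; exact EReal.coe_ne_top _
  | top => exact absurd rfl ha

lemma add_coe_ne_bot {a : EReal} (ha : a ≠ ⊥) (r : ℝ) : a + (r:EReal) ≠ ⊥ := by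
  induction a with
  | bot => exact absurd rfl ha
  | coe s => rw [← EReal.coe_add]; exact EReal.coe_ne_bot _
  | top => simp

variable {X Y : Type*}

lemma vmin_le (g : X → Y → EReal) (x : X) (y : Y) : vmin g x ≤ g x y := iInf_le _ y
lemma le_wmax (g : X → Y → EReal) (x : X) (y : Y) : g x y ≤ wmax g y := le_iSup (fun x => g x y) x
lemma vmin_le_Vval (g : X → Y → EReal) (x : X) : vmin g x ≤ Vval g := le_iSup (vmin g) x
lemma Wval_le_wmax (g : X → Y → EReal) (y : Y) : Wval g ≤ wmax g y := iInf_le (wmax g) y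

lemma Vval_le_Wval (g : X → Y → EReal) [Nonempty X] [Nonempty Y] : Vval g ≤ Wval g := by
  refine iSup_le fun x => le_iInf fun y => ?_
  exact (vmin_le g x y).trans (le_wmax g x y)

lemma vmin_transfer {g g' : X → Y → EReal} {r : ℝ} (h : ∀ x y, g x y ≤ g' x y + r) (x : X) :
    vmin g x ≤ vmin g' x + r := iInf_le_iInf_add (h x)

lemma wmax_transfer {g g' : X → Y → EReal} {r : ℝ} (h : ∀ x y, g x y ≤ g' x y + r) (y : Y) :
    wmax g y ≤ wmax g' y + r := iSup_le_iSup_add (fun x => h x y)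

lemma Vval_transfer {g g' : X → Y → EReal} {r : ℝ} (h : ∀ x y, g x y ≤ g' x y + r) :
    Vval g ≤ Vval g' + r := iSup_le_iSup_add (vmin_transfer h)

lemma Wval_transfer {g g' : X → Y → EReal} {r : ℝ} (h : ∀ x y, g x y ≤ g' x y + r) :
    Wval g ≤ Wval g' + r := iInf_le_iInf_add (wmax_transfer h)

lemma saddle_iff {g : X → Y → EReal} {x₀ : X} {y₀ : Y} :
    SaddlePt g x₀ y₀ ↔ wmax g y₀ ≤ vmin g x₀ := by
  constructor
  · intro hs
    exact (iSup_le fun x => (hs x y₀).1).trans (le_iInf fun y => (hs x₀ y).2)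
  · intro h x y
    constructor
    · exact (le_wmax g x y₀).trans (h.trans (vmin_le g x₀ y₀))
    · exact ((le_wmax g x₀ y₀).trans h).trans (vmin_le g x₀ y)

lemma saddle_eqs {g : X → Y → EReal} {x₀ : X} {y₀ : Y} (hs : SaddlePt g x₀ y₀) :
    vmin g x₀ = g x₀ y₀ ∧ wmax g y₀ = g x₀ y₀ ∧ Vval g = g x₀ y₀ ∧ Wval g = g x₀ y₀ := by
  have h := saddle_iff.1 hs
  have h1 : vmin g x₀ = g x₀ y₀ :=
    le_antisymm (vmin_le g x₀ y₀) ((le_wmax g x₀ y₀).trans h)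
  have h2 : wmax g y₀ = g x₀ y₀ :=
    le_antisymm (h.trans (vmin_le g x₀ y₀)) (le_wmax g x₀ y₀)
  refine ⟨h1, h2, ?_, ?_⟩
  · refine le_antisymm (iSup_le fun x => ?_) (h1 ▸ vmin_le_Vval g x₀)
    exact ((vmin_le g x y₀).trans (le_wmax g x y₀)).trans h2.le
  · refine le_antisymm ((Wval_le_wmax g y₀).trans h2.le) (le_iInf fun y => ?_)
    exact h1 ▸ (vmin_le g x₀ y).trans (le_wmax g x₀ y)

variable {Z : Type*} [TopologicalSpace Z]

lemma isClosed_sublevel {φ : Z → EReal} (hφ : LowerSemicontinuous φ)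
    {ψ : Z → ℝ} (hψ : Continuous ψ) (t : ℝ) :
    IsClosed {z | φ z + (ψ z : EReal) ≤ (t : EReal)} := by
  rw [← isOpen_compl_iff, isOpen_iff_mem_nhds]
  intro z₀ hz₀
  simp only [Set.mem_compl_iff, Set.mem_setOf_eq, not_le] at hz₀
  have hbot : (⊥ : EReal) < φ z₀ := by
    by_contra h
    push_neg at h
    have : φ z₀ = ⊥ := le_bot_iff.1 h
    rw [this] at hz₀
    simp [EReal.bot_add] at hz₀
  obtain ⟨a, ha1, ha2⟩ : ∃ a : ℝ, (a : EReal) < φ z₀ ∧ t - ψ z₀ < a := by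
    rcases eq_or_ne (φ z₀) ⊤ with h | h
    · exact ⟨t - ψ z₀ + 1, by rw [h]; exact EReal.coe_lt_top _, by linarith⟩
    · lift φ z₀ to ℝ using ⟨h, hbot.ne'⟩ with s hs
      have : (t : EReal) < (s + ψ z₀ : ℝ) := by rwa [EReal.coe_add]
      have hts : t - ψ z₀ < s := by
        have := EReal.coe_lt_coe_iff.1 this; linarith
      exact ⟨(s + (t - ψ z₀)) / 2, by
        rw [EReal.coe_lt_coe_iff]; linarith, by linarith⟩
  have h1 : {z | (a : EReal) < φ z} ∈ 𝓝 z₀ :=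
    (hφ.isOpen_preimage a).mem_nhds ha1
  have h2 : {z | t - a < ψ z} ∈ 𝓝 z₀ :=
    (isOpen_lt continuous_const hψ).mem_nhds (by simp only [Set.mem_setOf_eq]; linarith)
  filter_upwards [h1, h2] with z hz1 hz2
  simp only [Set.mem_compl_iff, Set.mem_setOf_eq, not_le]
  calc (t : EReal) = ((a + (t - a) : ℝ) : EReal) := by norm_num
  _ < φ z + (ψ z : EReal) := by
      rw [EReal.coe_add]
      exact EReal.add_lt_add hz1 (EReal.coe_lt_coe_iff.2 hz2)

lemma isClosed_superlevel {φ : Z → EReal} (hφ : UpperSemicontinuous φ)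
    {ψ : Z → ℝ} (hψ : Continuous ψ) (t : ℝ) :
    IsClosed {z | (t : EReal) ≤ φ z + (ψ z : EReal)} := by
  rw [← isOpen_compl_iff, isOpen_iff_mem_nhds]
  intro z₀ hz₀
  simp only [Set.mem_compl_iff, Set.mem_setOf_eq, not_le] at hz₀
  have htop : φ z₀ < (⊤ : EReal) := by
    by_contra h
    push_neg at h
    have : φ z₀ = ⊤ := top_le_iff.1 h
    rw [this, EReal.top_add_coe] at hz₀
    exact (lt_irrefl _ (hz₀.trans (EReal.coe_lt_top t))).elim
  obtain ⟨a, ha1, ha2⟩ : ∃ a : ℝ, φ z₀ < (a : EReal) ∧ a + ψ z₀ < t := by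
    rcases eq_or_ne (φ z₀) ⊥ with h | h
    · exact ⟨t - ψ z₀ - 1, by rw [h]; exact EReal.bot_lt_coe _, by linarith⟩
    · lift φ z₀ to ℝ using ⟨htop.ne, h⟩ with s hs
      have : ((s + ψ z₀ : ℝ) : EReal) < t := by rwa [EReal.coe_add]
      have hts : s + ψ z₀ < t := EReal.coe_lt_coe_iff.1 this
      exact ⟨(s + (t - ψ z₀)) / 2, by rw [EReal.coe_lt_coe_iff]; linarith, by linarith⟩
  have h1 : {z | φ z < (a : EReal)} ∈ 𝓝 z₀ :=
    (hφ.isOpen_preimage a).mem_nhds ha1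
  have h2 : {z | ψ z < t - a} ∈ 𝓝 z₀ :=
    (isOpen_lt hψ continuous_const).mem_nhds (by simp only [Set.mem_setOf_eq]; linarith)
  filter_upwards [h1, h2] with z hz1 hz2
  simp only [Set.mem_compl_iff, Set.mem_setOf_eq, not_le]
  calc φ z + (ψ z : EReal) < ((a + (t - a) : ℝ) : EReal) := by
        rw [EReal.coe_add]
        exact EReal.add_lt_add hz1 (EReal.coe_lt_coe_iff.2 hz2)
  _ = (t : EReal) := by norm_num

lemma geom_partial (k : ℕ) : ∑ m ∈ Finset.range k, (1/2:ℝ)^m = 2 - 2*(1/2)^k := by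
  induction k with
  | zero => simp
  | succ n ih => rw [Finset.sum_range_succ, ih]; ring

variable [CompletelyRegularSpace Z]

lemma bumpInf (h : Z → EReal) (hcl : ∀ t : ℝ, IsClosed {z | h z ≤ (t : EReal)})
    (zb : Z) (r γ : ℝ) (hγ : 0 < γ) (hval : h zb = (r : EReal))
    (hlow : ∀ z, ((r - γ : ℝ) : EReal) ≤ h z) :
    ∃ B : Z → ℝ, Continuous B ∧ (∀ z, 0 ≤ B z ∧ B z ≤ 4*γ) ∧ B zb = 4*γ ∧
      ∀ z, ((r - 4*γ + B z : ℝ) : EReal) ≤ h z := by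
  have hbump : ∀ m : ℕ, ∃ q : Z → ℝ, Continuous q ∧ q zb = 1 ∧
      (∀ z, 0 ≤ q z ∧ q z ≤ 1) ∧ ∀ z, h z ≤ ((r - γ*(1/2)^m : ℝ) : EReal) → q z = 0 := by
    intro m
    have hK : IsClosed {z | h z ≤ ((r - γ*(1/2)^m : ℝ) : EReal)} := hcl _
    have hzb : zb ∉ {z | h z ≤ ((r - γ*(1/2)^m : ℝ) : EReal)} := by
      simp only [Set.mem_setOf_eq, hval, EReal.coe_le_coe_iff, not_le]
      have : (0:ℝ) < γ*(1/2)^m := by positivity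
      linarith
    obtain ⟨f, hf, hf0, hf1⟩ := CompletelyRegularSpace.completely_regular zb _ hK hzb
    refine ⟨fun z => 1 - (f z : ℝ), (continuous_const.sub (continuous_subtype_val.comp hf)), ?_, ?_, ?_⟩
    · simp [hf0]
    · intro z
      refine ⟨sub_nonneg.2 (f z).2.2, ?_⟩
      have := (f z).2.1
      simp only []
      linarith
    · intro z hz
      have : f z = 1 := hf1 hz
      simp [this]
  choose q hqc hqzb hq01 hqK using hbump
  set c : ℕ → ℝ := fun m => 2*γ*(1/2)^m with hc
  have hcpos : ∀ m, 0 ≤ c m := fun m => by positivity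
  have hsum : Summable c := by
    simpa [hc, mul_assoc] using (summable_geometric_of_lt_one (by norm_num : (0:ℝ) ≤ 1/2)
      (by norm_num)).mul_left (2*γ)
  have hcsum : ∑' m, c m = 4*γ := by
    rw [hc]
    rw [tsum_mul_left, tsum_geometric_of_lt_one (by norm_num) (by norm_num)]
    norm_num
    ring
  have hterm : ∀ z m, 0 ≤ c m * q m z ∧ c m * q m z ≤ c m := by
    intro z m
    constructor
    · exact mul_nonneg (hcpos m) (hq01 m z).1
    · nth_rewrite 2 [← mul_one (c m)]
      exact mul_le_mul_of_nonneg_left (hq01 m z).2 (hcpos m)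
  have hsummable : ∀ z, Summable (fun m => c m * q m z) := by
    intro z
    exact Summable.of_nonneg_of_le (fun m => (hterm z m).1) (fun m => (hterm z m).2) hsum
  refine ⟨fun z => ∑' m, c m * q m z, ?_, ?_, ?_, ?_⟩
  · apply continuous_tsum (fun m => (continuous_const.mul (hqc m))) hsum
    intro m z
    show ‖c m * q m z‖ ≤ c m
    rw [Real.norm_eq_abs, abs_of_nonneg (hterm z m).1]
    exact (hterm z m).2
  · intro z
    refine ⟨tsum_nonneg (fun m => (hterm z m).1), ?_⟩
    calc ∑' m, c m * q m z ≤ ∑' m, c m := Summable.tsum_le_tsum (fun m => (hterm z m).2) (hsummable z) hsum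
    _ = 4*γ := hcsum
  · simp only [hqzb, mul_one]; exact hcsum
  · intro z
    rcases le_or_gt (r : EReal) (h z) with hle | hlt
    · refine le_trans ?_ hle
      rw [EReal.coe_le_coe_iff]
      have hzb2 : ∑' m, c m * q m z ≤ 4*γ :=
        (Summable.tsum_le_tsum (fun m => (hterm z m).2) (hsummable z) hsum).trans hcsum.le
      linarith
    · have hbot : h z ≠ ⊥ := fun hb => by
        have := hlow z; rw [hb] at this; exact (not_le.2 (EReal.bot_lt_coe _)) this
      have htop : h z ≠ ⊤ := fun ht => by rw [ht] at hlt; exact (not_le.2 hlt) le_top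
      lift h z to ℝ using ⟨htop, hbot⟩ with s hs
      have hsr : s < r := EReal.coe_lt_coe_iff.1 hlt
      have hsl : r - γ ≤ s := EReal.coe_le_coe_iff.1 (hs ▸ hlow z : ((r - γ:ℝ):EReal) ≤ (s:EReal))
      set gap : ℝ := r - s with hgap
      have hgap0 : 0 < gap := by simp [hgap]; linarith
      have hgapγ : gap ≤ γ := by simp [hgap]; linarith
      have hex : ∃ m : ℕ, γ*(1/2)^(m+1) < gap := by
        obtain ⟨n, hn⟩ := exists_pow_lt_of_lt_one (div_pos hgap0 hγ) (by norm_num : (1/2:ℝ) < 1)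
        refine ⟨n, ?_⟩
        have h2 : ((1:ℝ)/2)^(n+1) ≤ (1/2)^n := pow_le_pow_of_le_one (by norm_num) (by norm_num) (Nat.le_succ n)
        have := h2.trans_lt hn
        rw [lt_div_iff₀ hγ] at this
        linarith [this]
      set j := Nat.find hex with hj
      have hPj : γ*(1/2)^(j+1) < gap := Nat.find_spec hex
      have hgapj : gap ≤ γ*(1/2)^j := by
        rcases Nat.eq_zero_or_pos j with h0 | hpos
        · rw [h0]; simpa using hgapγ
        · obtain ⟨k, hk⟩ := Nat.exists_eq_succ_of_ne_zero hpos.ne'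
          have hkj : k < j := by omega
          have := Nat.find_min hex hkj
          push_neg at this
          calc gap ≤ γ*(1/2)^(k+1) := this
          _ = γ*(1/2)^j := by rw [hk]
      have hvanish : ∀ m ∉ Finset.range (j+1), c m * q m z = 0 := by
        intro m hm
        simp only [Finset.mem_range, not_lt] at hm
        have hsm : (s : EReal) ≤ ((r - γ*(1/2)^m : ℝ) : EReal) := by
          rw [EReal.coe_le_coe_iff]
          have h2 : γ*(1/2)^m ≤ γ*(1/2)^(j+1) :=
            mul_le_mul_of_nonneg_left (pow_le_pow_of_le_one (by norm_num) (by norm_num) hm) hγ.le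
          simp only [hgap] at hPj
          linarith
        rw [hqK m z (hs ▸ hsm), mul_zero]
      have hBz : ∑' m, c m * q m z ≤ 4*γ - 2*γ*(1/2)^j := by
        rw [tsum_eq_sum hvanish]
        calc ∑ m ∈ Finset.range (j+1), c m * q m z ≤ ∑ m ∈ Finset.range (j+1), c m :=
          Finset.sum_le_sum (fun m _ => (hterm z m).2)
        _ = 2*γ * ∑ m ∈ Finset.range (j+1), (1/2:ℝ)^m := by
            rw [Finset.mul_sum]
        _ = 2*γ * (2 - 2*(1/2)^(j+1)) := by rw [geom_partial]
        _ = 4*γ - 2*γ*(1/2)^j := by ring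
      rw [EReal.coe_le_coe_iff]
      have h3 : 2*γ*(1/2)^j ≥ 2*gap := by
        have := hgapj; linarith
      simp only [hgap] at h3
      linarith

lemma bumpSup (h : Z → EReal) (hcl : ∀ t : ℝ, IsClosed {z | (t : EReal) ≤ h z})
    (zb : Z) (r γ : ℝ) (hγ : 0 < γ) (hval : h zb = (r : EReal))
    (hhigh : ∀ z, h z ≤ ((r + γ : ℝ) : EReal)) :
    ∃ A : Z → ℝ, Continuous A ∧ (∀ z, 0 ≤ A z ∧ A z ≤ 4*γ) ∧ A zb = 4*γ ∧
      ∀ z, h z ≤ ((r + 4*γ - A z : ℝ) : EReal) := by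
  obtain ⟨B, hBc, hB01, hBzb, hBle⟩ := bumpInf (fun z => -h z)
    (fun t => by
      convert hcl (-t) using 1
      ext w
      simp only [Set.mem_setOf_eq, EReal.coe_neg]
      rw [EReal.neg_le])
    zb (-r) γ hγ (by show -h zb = _; rw [hval]; simp) (fun w => by
      have h1 : -((r + γ : ℝ) : EReal) ≤ -h w := EReal.neg_le_neg_iff.2 (hhigh w)
      calc ((-r - γ : ℝ) : EReal) = -((r + γ : ℝ) : EReal) := by
            rw [← EReal.coe_neg]; norm_cast; ring
      _ ≤ -h w := h1
      _ = (fun z => -h z) w := rfl)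
  refine ⟨B, hBc, hB01, hBzb, fun w => ?_⟩
  have h1 : ((- r - 4*γ + B w : ℝ) : EReal) ≤ -h w := hBle w
  have h2 : h w ≤ -((- r - 4*γ + B w : ℝ) : EReal) := EReal.le_neg_of_le_neg h1
  calc h w ≤ -((- r - 4*γ + B w : ℝ) : EReal) := h2
  _ = ((r + 4*γ - B w : ℝ) : EReal) := by rw [← EReal.coe_neg]; norm_cast; ring

end SPT

section MainAux

open SPT

variable {X Y : Type*} [TopologicalSpace X] [TopologicalSpace Y]

/-- pointwise transfer between two perturbed functions -/
lemma pt_transfer (f : X → Y → EReal) (z z' : (X × Y) →ᵇ ℝ) {e : ℝ}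
    (he : ‖z - z'‖ ≤ e) (x : X) (y : Y) :
    f x y + ((z (x,y) : ℝ) : EReal) ≤ (f x y + ((z' (x,y) : ℝ) : EReal)) + (e : EReal) := by
  have hb : |z (x,y) - z' (x,y)| ≤ e := by
    have := BoundedContinuousFunction.norm_coe_le_norm (z - z') (x,y)
    simp only [BoundedContinuousFunction.coe_sub, Pi.sub_apply, Real.norm_eq_abs] at this
    exact this.trans he
  have h1 : z (x,y) ≤ z' (x,y) + e := by
    have := abs_le.1 hb; linarith [this.2]
  calc f x y + ((z (x,y) : ℝ) : EReal) ≤ f x y + ((z' (x,y) + e : ℝ) : EReal) :=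
    add_coe_le_add_coe _ h1
  _ = (f x y + ((z' (x,y) : ℝ) : EReal)) + (e : EReal) := by
      rw [add_coe_add]

lemma VW_reals (f : X → Y → EReal) (hA2 : CondA2 f) (hA4 : CondA4 f) (z : (X × Y) →ᵇ ℝ) :
    ∃ c₁ c₂ : ℝ, Vval (fun x y => f x y + ((z (x,y) : ℝ) : EReal)) = (c₁ : EReal) ∧
      Wval (fun x y => f x y + ((z (x,y) : ℝ) : EReal)) = (c₂ : EReal) ∧ c₁ ≤ c₂ := by
  obtain ⟨⟨M, hM⟩, xh, hxh⟩ := hA2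
  obtain ⟨⟨m, hm⟩, yh, hyh⟩ := hA4
  have hX : Nonempty X := ⟨xh⟩
  have hY : Nonempty Y := ⟨yh⟩
  set G : X → Y → EReal := fun x y => f x y + ((z (x,y) : ℝ) : EReal) with hG
  set N : ℝ := ‖z‖ with hN
  have hGf : ∀ x y, G x y ≤ f x y + (N : EReal) := fun x y =>
    add_coe_le_add_coe _ (le_trans (le_abs_self _) (z.norm_coe_le_norm (x,y)))
  have hfG : ∀ x y, f x y ≤ G x y + (N : EReal) := by
    intro x y
    have h1 : 0 ≤ z (x,y) + N := by
      have := abs_le.1 (z.norm_coe_le_norm (x,y)); linarith [this.1]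
    calc f x y ≤ f x y + ((z (x,y) + N : ℝ) : EReal) := le_add_coe _ h1
    _ = G x y + (N : EReal) := by rw [hG, add_coe_add]
  -- Vval G is finite
  have hVtop : Vval G ≠ ⊤ := by
    intro ht
    have h1 : Vval G ≤ ((M + N : ℝ) : EReal) := by
      refine iSup_le fun x => ?_
      calc vmin G x ≤ vmin f x + (N : EReal) := vmin_transfer hGf x
      _ ≤ (M : EReal) + (N : EReal) := add_le_add_left (hM x) _
      _ = ((M + N : ℝ) : EReal) := (EReal.coe_add M N).symm
    rw [ht] at h1
    exact EReal.coe_ne_top _ (top_le_iff.1 h1)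
  have hVbot : Vval G ≠ ⊥ := by
    intro hb
    have h1 : vmin G xh = ⊥ := le_bot_iff.1 (hb ▸ vmin_le_Vval G xh)
    have h2 : vmin f xh ≤ vmin G xh + (N : EReal) := vmin_transfer hfG xh
    rw [h1, EReal.bot_add] at h2
    exact hxh (le_bot_iff.1 h2)
  have hWbot : Wval G ≠ ⊥ := by
    intro hb
    have h1 : ((m - N : ℝ) : EReal) ≤ Wval G := by
      refine le_iInf fun y => ?_
      rw [EReal.coe_sub, sub_le_iff']
      exact (hm y).trans (wmax_transfer hfG y)
    rw [hb] at h1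
    exact (not_le.2 (EReal.bot_lt_coe _)) h1
  have hWtop : Wval G ≠ ⊤ := by
    intro ht
    have h1 : Wval G ≤ wmax f yh + (N : EReal) := (Wval_le_wmax G yh).trans (wmax_transfer hGf yh)
    rw [ht] at h1
    exact add_coe_ne_top hyh N (top_le_iff.1 h1)
  refine ⟨(Vval G).toReal, (Wval G).toReal, (EReal.coe_toReal hVtop hVbot).symm,
    (EReal.coe_toReal hWtop hWbot).symm, ?_⟩
  rw [← EReal.coe_le_coe_iff, EReal.coe_toReal hVtop hVbot, EReal.coe_toReal hWtop hWbot]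
  exact Vval_le_Wval G

lemma real_seq_tendsto (c : ℝ) (a : ℝ) :
    Filter.Tendsto (fun n : ℕ => c + a * (1/(n+1))) Filter.atTop (nhds c) := by
  have h0 : Filter.Tendsto (fun n : ℕ => a * (1/(n+1:ℝ))) Filter.atTop (nhds 0) := by
    have := tendsto_one_div_add_atTop_nhds_zero_nat.const_mul a
    simpa using this
  have h1 : Filter.Tendsto (fun n : ℕ => c + a * (1/(n+1))) Filter.atTop (nhds (c + 0)) :=
    Filter.Tendsto.add tendsto_const_nhds h0
  simpa using h1

end MainAux

/-- **Theorem 4.5**: `S̃_f` is single-valued and upper semicontinuous at `z` iff the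
saddle point problem for `f + z` is well-posed. -/
theorem singleValued_usc_iff_wellPosed_joint
    {X Y : Type*} [TopologicalSpace X] [T2Space X] [CompletelyRegularSpace X]
    [TopologicalSpace Y] [T2Space Y] [CompletelyRegularSpace Y]
    (f : X → Y → EReal) (hA1 : CondA1 f) (hA2 : CondA2 f) (hA3 : CondA3 f) (hA4 : CondA4 f)
    (z : (X × Y) →ᵇ ℝ) :
    ((∃ p : X × Y, SolSetJoint f z = {p}) ∧
      (∀ W : Set (X × Y), IsOpen W → SolSetJoint f z ⊆ W →
        ∃ ε > (0 : ℝ), ∀ z' : (X × Y) →ᵇ ℝ, ‖z' - z‖ < ε → SolSetJoint f z' ⊆ W)) ↔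
    SPWellPosed (fun x y => f x y + (z (x, y) : EReal)) := by
  classical
  obtain ⟨c₁, c₂, hc₁, hc₂, hc₁₂⟩ := VW_reals f hA2 hA4 z
  set G : X → Y → EReal := fun x y => f x y + ((z (x, y) : ℝ) : EReal) with hGdef
  constructor
  · -- single-valued + usc implies well-posed
    rintro ⟨⟨p₀, hsingle⟩, husc⟩
    have hsadp₀ : SaddlePt G p₀.1 p₀.2 := by
      have hmem : p₀ ∈ SolSetJoint f z := by rw [hsingle]; exact rfl
      exact hmem
    refine ⟨p₀.1, p₀.2, hsadp₀, ?_, ?_⟩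
    · intro x y hxy
      have hmem : (x, y) ∈ SolSetJoint f z := hxy
      rw [hsingle] at hmem
      exact ⟨congrArg Prod.fst hmem, congrArg Prod.snd hmem⟩
    · intro xs ys hopt
      by_contra hnc
      -- the common value is c₁
      have hvw : c₂ = c₁ := by
        have h0 := hopt.2.2
        rw [show Wval (fun x y => f x y + ((z (x, y) : ℝ) : EReal)) = Wval G from rfl,
          show Vval (fun x y => f x y + ((z (x, y) : ℝ) : EReal)) = Vval G from rfl,
          hc₁, hc₂, ← EReal.coe_sub] at h0
        have : c₂ - c₁ = 0 := by exact_mod_cast h0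
        linarith
      -- get an open set U around p₀ missed frequently by the sequence
      rw [Filter.tendsto_def] at hnc
      push_neg at hnc
      obtain ⟨s, hs, hns⟩ := hnc
      obtain ⟨U, hUs, hUopen, hpU⟩ := mem_nhds_iff.1 hs
      obtain ⟨ε, hε, hUε⟩ := husc U hUopen (by
        rw [hsingle, Set.singleton_subset_iff]
        simpa using hpU)
      set γ : ℝ := ε / 9 with hγdef
      have hγ : 0 < γ := by positivity
      have hfreq : ∃ᶠ n in atTop, (xs n, ys n) ∉ U := by
        have h1 : ∃ᶠ n in atTop, (xs n, ys n) ∉ s := by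
          rw [← Filter.not_eventually]
          exact fun h => hns h
        exact h1.mono fun n hn hmem => hn (hUs hmem)
      have hev1 : ∀ᶠ n in atTop, ((c₁ - γ : ℝ) : EReal) < vmin G (xs n) := by
        have ht := hopt.1
        rw [show Vval (fun x y => f x y + ((z (x, y) : ℝ) : EReal)) = Vval G from rfl, hc₁] at ht
        exact ht.eventually (eventually_gt_nhds (by
          rw [EReal.coe_lt_coe_iff]; linarith))
      have hev2 : ∀ᶠ n in atTop, wmax G (ys n) < ((c₁ + γ : ℝ) : EReal) := by
        have ht := hopt.2.1
        rw [show Wval (fun x y => f x y + ((z (x, y) : ℝ) : EReal)) = Wval G from rfl, hc₂, hvw] at ht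
        exact ht.eventually (eventually_lt_nhds (by
          rw [EReal.coe_lt_coe_iff]; linarith))
      obtain ⟨n, hnU, hn1, hn2⟩ := (hfreq.and_eventually (hev1.and hev2)).exists
      set xb := xs n with hxb
      set yb := ys n with hyb
      -- the value at (xb, yb) is finite
      have hvg : ((c₁ - γ : ℝ) : EReal) < G xb yb := hn1.trans_le (SPT.vmin_le G xb yb)
      have hwg : G xb yb < ((c₁ + γ : ℝ) : EReal) := (SPT.le_wmax G xb yb).trans_lt hn2
      have hGtop : G xb yb ≠ ⊤ := (hwg.trans (EReal.coe_lt_top _)).ne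
      have hGbot : G xb yb ≠ ⊥ := ((EReal.bot_lt_coe _).trans hvg).ne'
      set r : ℝ := (G xb yb).toReal with hrdef
      have hr : G xb yb = (r : EReal) := (EReal.coe_toReal hGtop hGbot).symm
      have hrlt : r < c₁ + γ := EReal.coe_lt_coe_iff.1 (hr ▸ hwg)
      have hrgt : c₁ - γ < r := EReal.coe_lt_coe_iff.1 (hr ▸ hvg)
      -- bump on Y
      obtain ⟨B, hBc, hB01, hByb, hBle⟩ := SPT.bumpInf (fun y => G xb y)
        (fun t => by
          have := SPT.isClosed_sublevel (hA3 xb)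
            (z.continuous.comp (Continuous.prodMk_right xb)) t
          simpa [hGdef] using this)
        yb r (2*γ) (by positivity) hr
        (fun y => by
          calc ((r - 2*γ : ℝ) : EReal) ≤ ((c₁ - γ : ℝ) : EReal) := by
                rw [EReal.coe_le_coe_iff]; linarith
          _ ≤ vmin G xb := hn1.le
          _ ≤ G xb y := SPT.vmin_le G xb y)
      -- bump on X
      obtain ⟨A, hAc, hA01, hAxb, hAle⟩ := SPT.bumpSup (fun x => G x yb)
        (fun t => by
          have hcont : Continuous (fun x : X => z (x, yb)) :=
            z.continuous.comp (continuous_id.prodMk continuous_const)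
          have := SPT.isClosed_superlevel (φ := fun x => f x yb) (hA1 yb)
            (ψ := fun x => z (x, yb)) hcont t
          simpa [hGdef] using this)
        xb r (2*γ) (by positivity) hr
        (fun x => by
          calc G x yb ≤ wmax G yb := SPT.le_wmax G x yb
          _ ≤ ((c₁ + γ : ℝ) : EReal) := hn2.le
          _ ≤ ((r + 2*γ : ℝ) : EReal) := by rw [EReal.coe_le_coe_iff]; linarith)
      -- build the perturbation
      set w : (X × Y) →ᵇ ℝ := BoundedContinuousFunction.ofNormedAddCommGroup
        (fun p : X × Y => A p.1 - B p.2)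
        ((hAc.comp continuous_fst).sub (hBc.comp continuous_snd)) (4*(2*γ))
        (fun p => by
          have h1 := hA01 p.1
          have h2 := hB01 p.2
          have habs : |A p.1 - B p.2| ≤ 4*(2*γ) :=
            abs_le.2 ⟨by linarith [h1.1, h1.2, h2.1, h2.2], by linarith [h1.1, h1.2, h2.1, h2.2]⟩
          simpa [Real.norm_eq_abs] using habs) with hwdef
      have hwnorm : ‖w‖ ≤ 4*(2*γ) :=
        BoundedContinuousFunction.norm_ofNormedAddCommGroup_le _ (by positivity) _
      have hznorm : ‖(z + w) - z‖ < ε := by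
        rw [add_sub_cancel_left]
        calc ‖w‖ ≤ 4*(2*γ) := hwnorm
        _ < ε := by rw [hγdef]; linarith
      have happly : ∀ x y, f x y + (((z + w) (x, y) : ℝ) : EReal)
          = G x y + ((A x - B y : ℝ) : EReal) := by
        intro x y
        have : (z + w) (x, y) = z (x, y) + (A x - B y) := by
          simp [hwdef]
        rw [this, EReal.coe_add, ← add_assoc]
      have hsadnew : (xb, yb) ∈ SolSetJoint f (z + w) := by
        show SaddlePt (fun x y => f x y + (((z + w) (x, y) : ℝ) : EReal)) xb yb
        intro x y
        constructor
        · show f x yb + (((z + w) (x, yb) : ℝ) : EReal) ≤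
            f xb yb + (((z + w) (xb, yb) : ℝ) : EReal)
          rw [happly x yb, happly xb yb, hr]
          calc G x yb + ((A x - B yb : ℝ) : EReal)
              ≤ ((r + 4*(2*γ) - A x : ℝ) : EReal) + ((A x - B yb : ℝ) : EReal) :=
                add_le_add_left (hAle x) _
          _ = (r : EReal) + ((A xb - B yb : ℝ) : EReal) := by
                rw [hAxb, ← EReal.coe_add, ← EReal.coe_add]
                exact congrArg Real.toEReal (by ring)
        · show f xb yb + (((z + w) (xb, yb) : ℝ) : EReal) ≤
            f xb y + (((z + w) (xb, y) : ℝ) : EReal)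
          rw [happly xb yb, happly xb y, hr]
          calc (r : EReal) + ((A xb - B yb : ℝ) : EReal)
              = ((r - 4*(2*γ) + B y : ℝ) : EReal) + ((4*(2*γ) - B y : ℝ) : EReal) := by
                rw [hAxb, hByb, ← EReal.coe_add, ← EReal.coe_add]
                exact congrArg Real.toEReal (by ring)
          _ ≤ G xb y + ((4*(2*γ) - B y : ℝ) : EReal) := add_le_add_left (hBle y) _
          _ = G xb y + ((A xb - B y : ℝ) : EReal) := by rw [hAxb]
      have : (xb, yb) ∈ U := hUε (z + w) hznorm hsadnew
      exact hnU this
  · -- well-posed implies single-valued + usc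
    rintro ⟨x₀, y₀, hsp⟩
    have hsad₀ : SaddlePt G x₀ y₀ := hsp.1
    constructor
    · refine ⟨(x₀, y₀), Set.eq_singleton_iff_unique_mem.2 ⟨hsad₀, fun p hp => ?_⟩⟩
      have h1 := hsp.2.1 p.1 p.2 hp
      exact Prod.ext h1.1 h1.2
    · intro W hWopen hWsub
      by_contra hcon
      push_neg at hcon
      have H : ∀ n : ℕ, ∃ zc : (X × Y) →ᵇ ℝ, ‖zc - z‖ < 1/(n+1) ∧
          ∃ p, p ∈ SolSetJoint f zc ∧ p ∉ W := by
        intro n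
        obtain ⟨z', hz1, hz2⟩ := hcon (1/(n+1)) (by positivity)
        obtain ⟨p, hp1, hp2⟩ := Set.not_subset.1 hz2
        exact ⟨z', hz1, p, hp1, hp2⟩
      choose zn hzn pn hpn hpnW using H
      set Gn : ℕ → X → Y → EReal := fun n x y => f x y + ((zn n (x, y) : ℝ) : EReal) with hGn
      have hsad : ∀ n, SaddlePt (Gn n) (pn n).1 (pn n).2 := fun n => hpn n
      set e : ℕ → ℝ := fun n => 1/(n+1) with he
      have hzG : ∀ (n : ℕ) x y, G x y ≤ Gn n x y + ((e n : ℝ) : EReal) := fun n x y =>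
        pt_transfer f z (zn n) (by rw [norm_sub_rev]; exact (hzn n).le) x y
      have hGz : ∀ (n : ℕ) x y, Gn n x y ≤ G x y + ((e n : ℝ) : EReal) := fun n x y =>
        pt_transfer f (zn n) z (hzn n).le x y
      have key1 : ∀ n, ((c₁ : ℝ) : EReal) ≤ vmin G ((pn n).1) + ((2 * e n : ℝ) : EReal) := by
        intro n
        have e1 := SPT.saddle_eqs (hsad n)
        calc ((c₁ : ℝ) : EReal) = Vval G := hc₁.symm
        _ ≤ Vval (Gn n) + ((e n : ℝ) : EReal) := SPT.Vval_transfer (hzG n)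
        _ = vmin (Gn n) ((pn n).1) + ((e n : ℝ) : EReal) := by rw [e1.2.2.1, ← e1.1]
        _ ≤ (vmin G ((pn n).1) + ((e n : ℝ) : EReal)) + ((e n : ℝ) : EReal) :=
            add_le_add_left (SPT.vmin_transfer (hGz n) _) _
        _ = vmin G ((pn n).1) + ((2 * e n : ℝ) : EReal) := by
            rw [SPT.add_coe_add, show e n + e n = 2 * e n by ring]
      have key2 : ∀ n, wmax G ((pn n).2) ≤ ((c₂ + 2 * e n : ℝ) : EReal) := by
        intro n
        have e1 := SPT.saddle_eqs (hsad n)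
        calc wmax G ((pn n).2) ≤ wmax (Gn n) ((pn n).2) + ((e n : ℝ) : EReal) :=
            SPT.wmax_transfer (hzG n) _
        _ = Wval (Gn n) + ((e n : ℝ) : EReal) := by rw [e1.2.1, ← e1.2.2.2]
        _ ≤ (Wval G + ((e n : ℝ) : EReal)) + ((e n : ℝ) : EReal) :=
            add_le_add_left (SPT.Wval_transfer (hGz n)) _
        _ = Wval G + ((2 * e n : ℝ) : EReal) := by
            rw [SPT.add_coe_add, show e n + e n = 2 * e n by ring]
        _ = ((c₂ + 2 * e n : ℝ) : EReal) := by rw [hc₂, ← EReal.coe_add]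
      have key3 : ∀ n, c₂ ≤ c₁ + 2 * e n := by
        intro n
        have e1 := SPT.saddle_eqs (hsad n)
        have hchain : ((c₂ : ℝ) : EReal) ≤ ((c₁ + 2 * e n : ℝ) : EReal) := by
          calc ((c₂ : ℝ) : EReal) = Wval G := hc₂.symm
          _ ≤ Wval (Gn n) + ((e n : ℝ) : EReal) := SPT.Wval_transfer (hzG n)
          _ = Vval (Gn n) + ((e n : ℝ) : EReal) := by rw [e1.2.2.2, ← e1.2.2.1]
          _ ≤ (Vval G + ((e n : ℝ) : EReal)) + ((e n : ℝ) : EReal) :=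
              add_le_add_left (SPT.Vval_transfer (hGz n)) _
          _ = ((c₁ + 2 * e n : ℝ) : EReal) := by
              rw [hc₁, SPT.add_coe_add, ← EReal.coe_add,
                show e n + e n = 2 * e n by ring]
        exact EReal.coe_le_coe_iff.1 hchain
      have hc2c1 : c₂ = c₁ := by
        refine le_antisymm ?_ hc₁₂
        have hlim : Filter.Tendsto (fun n : ℕ => c₁ + 2 * (1/(n+1))) atTop (nhds c₁) :=
          real_seq_tendsto c₁ 2
        exact ge_of_tendsto' hlim (fun n => by simpa [he] using key3 n)
      -- optimizing sequence
      have hv_low : ∀ n, ((c₁ - 2 * e n : ℝ) : EReal) ≤ vmin G ((pn n).1) := by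
        intro n
        rw [EReal.coe_sub, SPT.sub_le_iff']
        exact key1 n
      have hv_up : ∀ n, vmin G ((pn n).1) ≤ ((c₁ : ℝ) : EReal) :=
        fun n => hc₁ ▸ SPT.vmin_le_Vval G _
      have hw_low : ∀ n, ((c₂ : ℝ) : EReal) ≤ wmax G ((pn n).2) :=
        fun n => hc₂ ▸ SPT.Wval_le_wmax G _
      have hlow_t : Filter.Tendsto (fun n : ℕ => ((c₁ - 2 * e n : ℝ) : EReal)) atTop
          (nhds ((c₁ : ℝ) : EReal)) := by
        rw [EReal.tendsto_coe]
        have := real_seq_tendsto c₁ (-2)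
        simpa [he, sub_eq_add_neg, neg_mul] using this
      have hhigh_t : Filter.Tendsto (fun n : ℕ => ((c₂ + 2 * e n : ℝ) : EReal)) atTop
          (nhds ((c₂ : ℝ) : EReal)) := by
        rw [EReal.tendsto_coe]
        have := real_seq_tendsto c₂ 2
        simpa [he] using this
      have hopt : OptimizingSeq G (fun n => (pn n).1) (fun n => (pn n).2) := by
        refine ⟨?_, ?_, ?_⟩
        · rw [show Vval G = ((c₁ : ℝ) : EReal) from hc₁]
          exact tendsto_of_tendsto_of_tendsto_of_le_of_le hlow_t tendsto_const_nhds hv_low hv_up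
        · rw [show Wval G = ((c₂ : ℝ) : EReal) from hc₂]
          exact tendsto_of_tendsto_of_tendsto_of_le_of_le tendsto_const_nhds hhigh_t hw_low
            (fun n => key2 n)
        · rw [show Wval G = ((c₂ : ℝ) : EReal) from hc₂,
            show Vval G = ((c₁ : ℝ) : EReal) from hc₁, hc2c1, ← EReal.coe_sub]
          simp
      have htend := hsp.2.2 _ _ hopt
      have hmemW : (x₀, y₀) ∈ W := hWsub hsad₀
      have hevW := htend (hWopen.mem_nhds hmemW)
      have hevW' : ∀ᶠ n in atTop, ((pn n).1, (pn n).2) ∈ W := hevW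
      obtain ⟨n, hn⟩ := hevW'.exists
      exact hpnW n (by simpa using hn)
end Helpers
end

section
/- Let X and Y be topological spaces and f : X × Y → [−∞, +∞] satisfy assumptions (A1)–(A4) with Δ_f finite. Let ε′ > 0, ε″ > 0, x₀ ∈ X and y₀ ∈ Y be such that v_f(x₀) > sup_{x∈X} v_f(x) − ε′ and w_f(y₀) < inf_{y∈Y} w_f(y) + ε″. Then f(x₀,y₀) < inf_{y∈Y} f(x₀,y) + ε′ + ε″ + Δ_f and f(x₀,y₀) > sup_{x∈X} f(x,y₀) − ε′ − ε″ − Δ_f. -/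
open Filter Topology BoundedContinuousFunction

/-! `f(x₀,y₀)` is squeezed between `v_f(x₀) > V_f - ε'` and `w_f(y₀) < W_f + ε'' = V_f + Δ_f + ε''`,
and `v_f(x₀) ≤ V_f`, `W_f ≤ w_f(y₀)`. A finite `Δ_f = W_f - V_f` forces `V_f` and `W_f` to be finite
(in `EReal`, `⊤ - ⊤ = ⊥ - ⊥ = ⊥`), so all five values are real and the estimates are linear
arithmetic. -/

theorem EReal.exists_coe_of_sub_ne_bot_of_sub_ne_top {a b : EReal} (h₁ : a - b ≠ ⊥)
    (h₂ : a - b ≠ ⊤) : ∃ x y : ℝ, a = x ∧ b = y := by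
  induction a <;> induction b <;> simp_all

theorem EReal.exists_coe_of_coe_le_of_le_coe {x : EReal} {a b : ℝ} (ha : (a : EReal) ≤ x)
    (hb : x ≤ b) : ∃ r : ℝ, x = r := by
  induction x <;> simp_all

theorem EReal.sandwich_bounds_of_near_optimal {v t w V W : EReal} {ε' ε'' : ℝ}
    (hvt : v ≤ t) (htw : t ≤ w) (hvV : v ≤ V) (hWw : W ≤ w)
    (hΔ : W - V ≠ ⊥ ∧ W - V ≠ ⊤) (hv : V - ε' < v) (hw : w < W + ε'') :
    t < v + ((ε' + ε'' : ℝ) : EReal) + (W - V) ∧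
      w - ((ε' + ε'' : ℝ) : EReal) - (W - V) < t := by
  obtain ⟨W, V, rfl, rfl⟩ := exists_coe_of_sub_ne_bot_of_sub_ne_top hΔ.1 hΔ.2
  rw [← coe_sub] at hv
  rw [← coe_add] at hw
  obtain ⟨v, rfl⟩ := exists_coe_of_coe_le_of_le_coe hv.le hvV
  obtain ⟨w, rfl⟩ := exists_coe_of_coe_le_of_le_coe hWw hw.le
  obtain ⟨t, rfl⟩ := exists_coe_of_coe_le_of_le_coe hvt htw
  norm_cast at *
  constructor <;> linarith

theorem eps_saddle_estimates_general
    {X Y : Type*} (f : X → Y → EReal)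
    (hΔfin : Wval f - Vval f ≠ ⊥ ∧ Wval f - Vval f ≠ ⊤)
    (ε' ε'' : ℝ) (x₀ : X) (y₀ : Y)
    (hx₀ : Vval f - (ε' : EReal) < vmin f x₀)
    (hy₀ : wmax f y₀ < Wval f + (ε'' : EReal)) :
    f x₀ y₀ < vmin f x₀ + ((ε' + ε'' : ℝ) : EReal) + (Wval f - Vval f) ∧
    wmax f y₀ - ((ε' + ε'' : ℝ) : EReal) - (Wval f - Vval f) < f x₀ y₀ :=
  EReal.sandwich_bounds_of_near_optimal (iInf_le (f x₀) y₀) (le_iSup (f · y₀) x₀)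
    (le_iSup (vmin f) x₀) (iInf_le (wmax f) y₀) hΔfin hx₀ hy₀

/-- Key estimates from the proof of Theorem 3.3:
`f(x₀,y₀) < inf_y f(x₀,y) + ε' + ε'' + Δ_f` and
`f(x₀,y₀) > sup_x f(x,y₀) - ε' - ε'' - Δ_f`. -/
theorem eps_saddle_estimates
    {X Y : Type*} [TopologicalSpace X] [TopologicalSpace Y]
    (f : X → Y → EReal) (hA1 : CondA1 f) (hA2 : CondA2 f) (hA3 : CondA3 f) (hA4 : CondA4 f)
    (hΔfin : Wval f - Vval f ≠ ⊥ ∧ Wval f - Vval f ≠ ⊤)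
    (ε' ε'' : ℝ) (hε' : 0 < ε') (hε'' : 0 < ε'') (x₀ : X) (y₀ : Y)
    (hx₀ : Vval f - (ε' : EReal) < vmin f x₀)
    (hy₀ : wmax f y₀ < Wval f + (ε'' : EReal)) :
    f x₀ y₀ < vmin f x₀ + ((ε' + ε'' : ℝ) : EReal) + (Wval f - Vval f) ∧
    wmax f y₀ - ((ε' + ε'' : ℝ) : EReal) - (Wval f - Vval f) < f x₀ y₀ :=
  eps_saddle_estimates_general f hΔfin ε' ε'' x₀ y₀ hx₀ hy₀
end
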